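/- arXiv:1507.02740 — 11 statements merged into one kernel-verified Lean document; each statement's English description precedes it below -/
import Mathlib

section
/- Let A : Matrix (Fin m) (Fin n) ℤ with columns a_1, …, a_n, fix a Gale transform G of A, and suppose not every column of A is free (i.e., G(a_k) ≠ 0 for some k). For i ≠ j in Fin n, the following are equivalent: (1) there exists a cocircuit of A whose support equals {i, j}; (2) G(a_i) ≠ 0, G(a_j) ≠ 0, and there exist nonzero integers p, q with p · G(a_i) = q · G(a_j). -/
/-- The integer kernel of an integer matrix. -/
def kerZ {m n : ℕ} (A : Matrix (Fin m) (Fin n) ℤ) : Set (Fin n → ℤ) :=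
  {u | A.mulVec u = 0}

/-- `G` is a Gale transform of `A` (relative to `r`): the columns of `G` lie in the
integer kernel of `A` and form a `ℤ`-basis of it. The Gale transform of the `i`-th
column `a_i` of `A` is then the `i`-th row `G i` of `G`. -/
def IsGaleTransform {m n r : ℕ} (A : Matrix (Fin m) (Fin n) ℤ)
    (G : Matrix (Fin n) (Fin (n - r)) ℤ) : Prop :=
  (∀ j, (fun i => G i j) ∈ kerZ A) ∧
  ∀ v ∈ kerZ A, ∃! lam : Fin (n - r) → ℤ, v = ∑ j, lam j • (fun i => G i j)

/-- `w` is a covector of `A`. -/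
def IsCovector {m n : ℕ} (A : Matrix (Fin m) (Fin n) ℤ) (w : Fin n → ℤ) : Prop :=
  ∃ v : Fin m → ℤ, w = A.transpose.mulVec v

/-- `w` is a cocircuit of `A`: a nonzero covector of minimal support. -/
def IsCocircuit {m n : ℕ} (A : Matrix (Fin m) (Fin n) ℤ) (w : Fin n → ℤ) : Prop :=
  IsCovector A w ∧ w ≠ 0 ∧
    ∀ w' : Fin n → ℤ, IsCovector A w' → w' ≠ 0 →
      ¬ Function.support w' ⊂ Function.support w

open Matrix

/-- Casting a matrix-vector product from ℤ to ℚ. -/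
lemma castMulVecQ {m n : ℕ} (A : Matrix (Fin m) (Fin n) ℤ) (u : Fin n → ℤ) (i : Fin m) :
    (A.map (fun x : ℤ => (x : ℚ))).mulVec (fun k => (u k : ℚ)) i = ((A.mulVec u i : ℤ) : ℚ) := by
  simp only [Matrix.mulVec, dotProduct, Matrix.map_apply]
  push_cast
  rfl

/-- Clearing denominators of a finite family of rationals. -/
lemma exists_int_rep {k : ℕ} (u : Fin k → ℚ) :
    ∃ (d : ℤ) (u' : Fin k → ℤ), 0 < d ∧ ∀ t, (u' t : ℚ) = (d : ℚ) * u t := by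
  classical
  refine ⟨∏ t, ((u t).den : ℤ), ?_, ?_, ?_⟩
  · exact fun t => (u t).num * ((∏ s, ((u s).den : ℤ)) / ((u t).den : ℤ))
  · exact Finset.prod_pos fun t _ => Int.natCast_pos.mpr (u t).pos
  · intro t
    obtain ⟨c, hc⟩ : ((u t).den : ℤ) ∣ ∏ s, ((u s).den : ℤ) :=
      Finset.dvd_prod_of_mem _ (Finset.mem_univ t)
    have hden : ((u t).den : ℤ) ≠ 0 := Int.natCast_ne_zero.mpr (u t).den_nz
    rw [hc, Int.mul_ediv_cancel_left _ hden]
    have hden0 : (((u t).den : ℕ) : ℚ) ≠ 0 := Nat.cast_ne_zero.mpr (u t).den_nz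
    have hnum : ((u t).num : ℚ) = u t * ((u t).den : ℚ) :=
      (div_eq_iff hden0).mp (Rat.num_div_den (u t))
    push_cast
    rw [hnum]
    ring

/-- A covector is orthogonal to the integer kernel. -/
lemma covector_dot {m n : ℕ} {A : Matrix (Fin m) (Fin n) ℤ} {w : Fin n → ℤ}
    (hw : IsCovector A w) {u : Fin n → ℤ} (hu : u ∈ kerZ A) : w ⬝ᵥ u = 0 := by
  obtain ⟨v, rfl⟩ := hw
  rw [Matrix.mulVec_transpose, ← Matrix.dotProduct_mulVec, hu, dotProduct_zero]

/-- Orthogonality to the columns of a Gale transform implies orthogonality to the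
integer kernel. -/
lemma dot_kerZ_of_cols {m n r : ℕ} {A : Matrix (Fin m) (Fin n) ℤ}
    {G : Matrix (Fin n) (Fin (n - r)) ℤ} (hG : IsGaleTransform A G)
    (w : Fin n → ℤ) (hw : ∀ l, w ⬝ᵥ (fun i => G i l) = 0) :
    ∀ u ∈ kerZ A, w ⬝ᵥ u = 0 := by
  intro u hu
  obtain ⟨lam, hlam, -⟩ := hG.2 u hu
  rw [hlam]
  have hcalc : w ⬝ᵥ (∑ l, lam l • fun i => G i l) = ∑ l, lam l * (w ⬝ᵥ fun i => G i l) := by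
    calc w ⬝ᵥ (∑ l, lam l • fun i => G i l)
        = ∑ k, w k * ∑ l, lam l * G k l := by
          simp [dotProduct, Finset.sum_apply]
      _ = ∑ k, ∑ l, w k * (lam l * G k l) := by
          simp [Finset.mul_sum]
      _ = ∑ l, ∑ k, w k * (lam l * G k l) := Finset.sum_comm
      _ = ∑ l, lam l * (w ⬝ᵥ fun i => G i l) := by
          simp only [dotProduct, Finset.mul_sum]
          refine Finset.sum_congr rfl fun l _ => Finset.sum_congr rfl fun k _ => by ring
  rw [hcalc]
  refine Finset.sum_eq_zero fun l _ => ?_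
  rw [hw l, mul_zero]

/-- A vector orthogonal to the integer kernel has a nonzero multiple which is a covector. -/
lemma exists_smul_covector {m n : ℕ} (A : Matrix (Fin m) (Fin n) ℤ) (w : Fin n → ℤ)
    (h : ∀ u ∈ kerZ A, w ⬝ᵥ u = 0) :
    ∃ d : ℤ, d ≠ 0 ∧ IsCovector A (d • w) := by
  classical
  set B : Matrix (Fin m) (Fin n) ℚ := A.map (fun x : ℤ => (x : ℚ)) with hBdef
  set wq : Fin n → ℚ := fun k => (w k : ℚ) with hwq
  let φ : (Fin n → ℚ) →ₗ[ℚ] ℚ :=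
    { toFun := fun u => wq ⬝ᵥ u
      map_add' := fun a b => dotProduct_add _ _ _
      map_smul' := fun c a => by simp [dotProduct_smul, smul_eq_mul] }
  have hker : LinearMap.ker B.mulVecLin ≤ LinearMap.ker φ := by
    intro u hu
    have hu0 : B.mulVec u = 0 := hu
    obtain ⟨d, u', hd, hu'⟩ := exists_int_rep u
    have hkz : u' ∈ kerZ A := by
      have h1 : B.mulVec (fun k => (u' k : ℚ)) = 0 := by
        have h2 : (fun k => (u' k : ℚ)) = (d : ℚ) • u := funext hu'
        rw [h2, Matrix.mulVec_smul, hu0, smul_zero]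
      show A.mulVec u' = 0
      funext i
      have h3 := congrFun h1 i
      rw [castMulVecQ] at h3
      simp only [Pi.zero_apply] at h3 ⊢
      exact_mod_cast h3
    have hz : w ⬝ᵥ u' = 0 := h u' hkz
    have hq : wq ⬝ᵥ (fun k => (u' k : ℚ)) = 0 := by
      have : wq ⬝ᵥ (fun k => (u' k : ℚ)) = ((w ⬝ᵥ u' : ℤ) : ℚ) := by
        simp only [dotProduct, hwq]
        push_cast
        rfl
      rw [this, hz, Int.cast_zero]
    have hfun : (fun k => (u' k : ℚ)) = (d : ℚ) • u := by
      funext t; rw [hu' t]; rfl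
    have hsm : wq ⬝ᵥ ((d : ℚ) • u) = 0 := by
      rw [← hfun]; exact hq
    have hdq : (d : ℚ) ≠ 0 := Int.cast_ne_zero.mpr hd.ne'
    have : (d : ℚ) * (wq ⬝ᵥ u) = 0 := by
      simpa [dotProduct_smul, smul_eq_mul] using hsm
    have : wq ⬝ᵥ u = 0 := by
      rcases mul_eq_zero.mp this with h' | h'
      · exact absurd h' hdq
      · exact h'
    exact this
  -- factor φ through B
  let K := LinearMap.ker B.mulVecLin
  let fbar := K.liftQ B.mulVecLin le_rfl
  have hfinj : LinearMap.ker fbar = ⊥ := Submodule.ker_liftQ_eq_bot _ _ _ le_rfl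
  obtain ⟨g, hg⟩ := LinearMap.exists_leftInverse_of_injective fbar hfinj
  let ψ : (Fin m → ℚ) →ₗ[ℚ] ℚ := (K.liftQ φ hker).comp g
  have hψ : ∀ u : Fin n → ℚ, ψ (B.mulVec u) = wq ⬝ᵥ u := by
    intro u
    have h1 : B.mulVec u = fbar (Submodule.Quotient.mk u) := rfl
    have h2 : g (fbar (Submodule.Quotient.mk u)) = Submodule.Quotient.mk u := by
      have := congrFun (congrArg DFunLike.coe hg) (Submodule.Quotient.mk u)
      simpa using this
    show (K.liftQ φ hker) (g (B.mulVec u)) = wq ⬝ᵥ u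
    rw [h1, h2]
    rfl
  let vq : Fin m → ℚ := fun i => ψ (Pi.single i (1 : ℚ))
  have hrep : ∀ y : Fin m → ℚ, ψ y = vq ⬝ᵥ y := by
    intro y
    rw [LinearMap.pi_apply_eq_sum_univ ψ y]
    simp only [dotProduct, vq, smul_eq_mul]
    refine Finset.sum_congr rfl fun i _ => ?_
    have : ((Pi.single i (1:ℚ) : Fin m → ℚ)) = fun j => if i = j then (1:ℚ) else 0 := by
      funext j
      simp [Pi.single_apply, eq_comm]
    rw [← this, mul_comm]
  have hweq : wq = Bᵀ.mulVec vq := by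
    funext k
    have h1 : wq k = wq ⬝ᵥ Pi.single k 1 := by
      rw [dotProduct_single, mul_one]
    have h2 : Bᵀ.mulVec vq k = vq ⬝ᵥ B.mulVec (Pi.single k 1) := by
      rw [Matrix.dotProduct_mulVec, Matrix.mulVec_transpose]
      rw [dotProduct_single, mul_one]
    rw [h1, ← hψ, hrep, h2]
  obtain ⟨d, v, hd, hv⟩ := exists_int_rep vq
  refine ⟨d, hd.ne', v, ?_⟩
  funext k
  have hcast : ((Aᵀ.mulVec v k : ℤ) : ℚ) = Bᵀ.mulVec (fun i => (v i : ℚ)) k := by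
    have : Bᵀ = Aᵀ.map (fun x : ℤ => (x : ℚ)) := by
      funext a b; simp [hBdef, Matrix.transpose_apply, Matrix.map_apply]
    rw [this, castMulVecQ]
  have h4 : Bᵀ.mulVec (fun i => (v i : ℚ)) k = (d : ℚ) * (Bᵀ.mulVec vq k) := by
    have : (fun i => (v i : ℚ)) = (d : ℚ) • vq := funext hv
    rw [this, Matrix.mulVec_smul]
    simp [smul_eq_mul]
  have : ((d • w) k : ℚ) = ((Aᵀ.mulVec v k : ℤ) : ℚ) := by
    rw [hcast, h4, ← hweq]
    simp [hwq, smul_eq_mul]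
  exact_mod_cast this

/-- A covector supported inside a singleton `{k}` with `G k ≠ 0` must vanish. -/
lemma covector_single_support_eq_zero {m n r : ℕ} {A : Matrix (Fin m) (Fin n) ℤ}
    {G : Matrix (Fin n) (Fin (n - r)) ℤ} (hG : IsGaleTransform A G)
    {k : Fin n} (hGk : G k ≠ 0) (w' : Fin n → ℤ) (hcov : IsCovector A w')
    (hsupp : Function.support w' ⊆ {k}) : w' = 0 := by
  by_contra hne
  have hk : w' k ≠ 0 := by
    intro h0
    apply hne
    funext t
    by_cases ht : t = k
    · rw [ht]; exact h0
    · by_contra ht0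
      exact ht (hsupp ht0)
  have hcols : ∀ l, G k l = 0 := by
    intro l
    have hdot : w' ⬝ᵥ (fun i => G i l) = 0 := covector_dot hcov (hG.1 l)
    have hsum : w' ⬝ᵥ (fun i => G i l) = w' k * G k l := by
      simp only [dotProduct]
      refine Finset.sum_eq_single k (fun t _ ht => ?_) (fun h => absurd (Finset.mem_univ k) h)
      have : w' t = 0 := by
        by_contra ht0
        exact ht (hsupp ht0)
      rw [this, zero_mul]
    rw [hsum] at hdot
    exact (mul_eq_zero.mp hdot).resolve_left hk
  exact hGk (by funext l; exact hcols l)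

theorem cocircuit_pair_iff_gale_parallel {m n : ℕ}
    (A : Matrix (Fin m) (Fin n) ℤ) (r : ℕ)
    (hr : r = (A.map (fun x : ℤ => (x : ℚ))).rank)
    (G : Matrix (Fin n) (Fin (n - r)) ℤ) (hG : IsGaleTransform A G)
    (hnotfree : ∃ k : Fin n, G k ≠ 0)
    (i j : Fin n) (hij : i ≠ j) :
    (∃ w : Fin n → ℤ, IsCocircuit A w ∧ Function.support w = ({i, j} : Set (Fin n))) ↔
      (G i ≠ 0 ∧ G j ≠ 0 ∧ ∃ p q : ℤ, p ≠ 0 ∧ q ≠ 0 ∧ p • G i = q • G j) := by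
  constructor
  · rintro ⟨w, ⟨hcov, hwne, hmin⟩, hsupp⟩
    have hwi : w i ≠ 0 := by
      have : i ∈ Function.support w := hsupp ▸ Set.mem_insert i {j}
      exact this
    have hwj : w j ≠ 0 := by
      have : j ∈ Function.support w := hsupp ▸ Set.mem_insert_of_mem i rfl
      exact this
    have hwk : ∀ k, k ≠ i → k ≠ j → w k = 0 := by
      intro k hki hkj
      by_contra h0
      have : k ∈ ({i, j} : Set (Fin n)) := hsupp ▸ h0
      rcases this with h | h
      · exact hki h
      · exact hkj h
    have hdot : ∀ l, w i * G i l + w j * G j l = 0 := by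
      intro l
      have h1 : w ⬝ᵥ (fun t => G t l) = 0 := covector_dot hcov (hG.1 l)
      have h2 : w ⬝ᵥ (fun t => G t l) = ∑ t ∈ ({i, j} : Finset (Fin n)), w t * G t l := by
        simp only [dotProduct]
        refine (Finset.sum_subset (Finset.subset_univ _) fun t _ ht => ?_).symm
        have hti : t ≠ i := fun h => ht (by simp [h])
        have htj : t ≠ j := fun h => ht (by simp [h])
        rw [hwk t hti htj, zero_mul]
      rw [h2, Finset.sum_pair hij] at h1
      exact h1
    -- G i ≠ 0
    have hGi : G i ≠ 0 := by
      intro hGi0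
      have hGj0 : G j = 0 := by
        funext l
        have := hdot l
        rw [congrFun hGi0 l] at this
        simp at this
        rcases this with h | h
        · exact absurd h hwj
        · exact h
      -- produce a covector supported on {i}
      have hperp : ∀ u ∈ kerZ A, (Pi.single i 1 : Fin n → ℤ) ⬝ᵥ u = 0 := by
        apply dot_kerZ_of_cols hG
        intro l
        rw [single_dotProduct, one_mul]
        exact congrFun hGi0 l
      obtain ⟨d, hd, hcov'⟩ := exists_smul_covector A _ hperp
      have hsupp' : Function.support (d • (Pi.single i 1 : Fin n → ℤ)) = {i} := by
        ext t
        simp only [Function.mem_support, Pi.smul_apply, smul_eq_mul, Set.mem_singleton_iff,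
          Pi.single_apply]
        constructor
        · intro h
          by_contra ht
          simp [ht] at h
        · intro h
          simp [h, hd]
      refine hmin _ hcov' ?_ ?_
      · intro h0
        have := congrFun h0 i
        simp [hd] at this
      · rw [hsupp', hsupp]
        constructor
        · intro t ht
          rw [Set.mem_singleton_iff] at ht
          rw [ht]; exact Set.mem_insert i {j}
        · intro hsub
          have : j ∈ ({i} : Set (Fin n)) := hsub (Set.mem_insert_of_mem i rfl)
          exact hij (Set.mem_singleton_iff.mp this).symm
    have hGj : G j ≠ 0 := by
      intro hGj0
      apply hGi
      funext l
      have := hdot l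
      rw [congrFun hGj0 l] at this
      simp at this
      rcases this with h | h
      · exact absurd h hwi
      · exact h
    refine ⟨hGi, hGj, w i, -(w j), hwi, neg_ne_zero.mpr hwj, ?_⟩
    funext l
    have := hdot l
    simp only [Pi.smul_apply, smul_eq_mul]
    linarith
  · rintro ⟨hGi, hGj, p, q, hp, hq, hpq⟩
    set w0 : Fin n → ℤ := Pi.single i p - Pi.single j q with hw0
    have hw0i : w0 i = p := by
      simp [hw0, Pi.single_apply, hij, Ne.symm hij]
    have hw0j : w0 j = -q := by
      simp [hw0, Pi.single_apply, hij, Ne.symm hij]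
    have hw0k : ∀ k, k ≠ i → k ≠ j → w0 k = 0 := by
      intro k hki hkj
      simp [hw0, Pi.single_apply, hki, hkj]
    have hperp : ∀ u ∈ kerZ A, w0 ⬝ᵥ u = 0 := by
      apply dot_kerZ_of_cols hG
      intro l
      rw [hw0, sub_dotProduct, single_dotProduct, single_dotProduct]
      have := congrFun hpq l
      simp only [Pi.smul_apply, smul_eq_mul] at this
      linarith
    obtain ⟨d, hd, hcov⟩ := exists_smul_covector A w0 hperp
    have hsupp : Function.support (d • w0) = ({i, j} : Set (Fin n)) := by
      ext t
      simp only [Function.mem_support, Pi.smul_apply, smul_eq_mul, Set.mem_insert_iff,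
        Set.mem_singleton_iff]
      constructor
      · intro h
        by_contra hc
        push_neg at hc
        rw [hw0k t hc.1 hc.2, mul_zero] at h
        exact h rfl
      · rintro (rfl | rfl)
        · rw [hw0i]; exact mul_ne_zero hd hp
        · rw [hw0j]
          simpa using mul_ne_zero hd hq
    refine ⟨d • w0, ⟨hcov, ?_, ?_⟩, hsupp⟩
    · intro h0
      have := congrFun h0 i
      simp only [Pi.smul_apply, smul_eq_mul, hw0i, Pi.zero_apply] at this
      exact (mul_ne_zero hd hp) this
    · intro w' hcov' hw'ne hss
      rw [hsupp] at hss
      have key : ∀ k : Fin n, G k ≠ 0 → Function.support w' ⊆ {k} → False := fun k hGk hs =>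
        hw'ne (covector_single_support_eq_zero hG hGk w' hcov' hs)
      obtain ⟨k, hk1, hk2⟩ := Set.exists_of_ssubset hss
      rcases hk1 with rfl | hk1
      · -- i is missing from the support, so support ⊆ {j}
        refine key j hGj ?_
        intro t ht
        rcases hss.1 ht with h | h
        · exact absurd (h ▸ ht) hk2
        · exact h
      · rw [Set.mem_singleton_iff] at hk1
        subst hk1
        refine key i hGi ?_
        intro t ht
        rcases hss.1 ht with h | h
        · exact h
        · exact absurd (h ▸ ht) hk2
end

section
/- Let A : Matrix (Fin m) (Fin n) ℤ with columns a_1, …, a_n and fix a Gale transform G of A. Let i ≠ j in Fin n and let w be a cocircuit of A whose support equals {i, j}. Then: w_i · w_j < 0 if and only if there exist positive integers p, q with p · G(a_i) = q · G(a_j); and w_i · w_j > 0 if and only if there exist positive integers p, q with p · G(a_i) = −q · G(a_j). -/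
/-!
Every covector is orthogonal to the integer kernel, so a covector `w` supported on `{i, j}`
satisfies `w i • G i + w j • G j = 0`. Minimality of the cocircuit forces `G i ≠ 0`: otherwise
every kernel vector vanishes at `i`, so (over `ℚ`, then clearing denominators) a nonzero multiple
of the `i`-th unit vector is a covector, with support strictly inside `{i, j}`. For a nonzero `x`,
`a • x + b • y = 0` makes `x` and `y` positively proportional exactly when `a * b < 0`.
-/

open Matrix

section Proportional

variable {R M : Type*} [CommRing R] [LinearOrder R] [IsStrictOrderedRing R]
  [AddCommGroup M] [Module R M] [Module.IsTorsionFree R M] {a b : R} {x y : M}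

theorem exists_pos_smul_eq_pos_smul_iff_mul_neg (hx : x ≠ 0) (hb : b ≠ 0)
    (h : a • x + b • y = 0) :
    (∃ p q : R, 0 < p ∧ 0 < q ∧ p • x = q • y) ↔ a * b < 0 := by
  have hby : b • y = -(a • x) := eq_neg_of_add_eq_zero_right h
  constructor
  · rintro ⟨p, q, hp, hq, hpq⟩
    have hcoef : q * a + b * p = 0 := by
      rw [← smul_eq_zero_iff_left hx, add_smul, mul_smul, mul_smul, hpq, smul_comm b q, hby,
        smul_neg, add_neg_cancel]
    have hneg : q * (a * b) < 0 := by
      rw [show q * (a * b) = -(b ^ 2 * p) by linear_combination b * hcoef]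
      exact neg_neg_of_pos (mul_pos (sq_pos_of_ne_zero hb) hp)
    exact neg_of_mul_neg_right hneg hq.le
  · intro hab
    -- multiply `a • x = -(b • y)` by `b`
    refine ⟨-(a * b), b ^ 2, neg_pos.2 hab, sq_pos_of_ne_zero hb, ?_⟩
    rw [sq, mul_smul, hby, neg_smul, smul_neg, mul_comm, mul_smul]

theorem exists_pos_smul_eq_neg_pos_smul_iff_mul_pos (hx : x ≠ 0) (hb : b ≠ 0)
    (h : a • x + b • y = 0) :
    (∃ p q : R, 0 < p ∧ 0 < q ∧ p • x = -(q • y)) ↔ 0 < a * b := by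
  have h' : a • x + (-b) • (-y) = 0 := by rwa [neg_smul_neg]
  simpa only [smul_neg, mul_neg, neg_lt_zero] using
    exists_pos_smul_eq_pos_smul_iff_mul_neg hx (neg_ne_zero.2 hb) h'

end Proportional

theorem Matrix.exists_vecMul_eq_single_of_forall_mulVec_eq_zero {K m n : Type*} [Field K]
    [Fintype m] [Fintype n] [DecidableEq n] (A : Matrix m n K) (i : n)
    (h : ∀ x, A *ᵥ x = 0 → x i = 0) : ∃ c, c ᵥ* A = Pi.single i 1 := by
  classical
  have hmem : LinearMap.proj i ∈ (LinearMap.ker A.mulVecLin).dualAnnihilator :=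
    (Submodule.mem_dualAnnihilator _).2 fun x hx => h x hx
  obtain ⟨φ, hφ⟩ := (LinearMap.range_dualMap_eq_dualAnnihilator_ker A.mulVecLin).ge hmem
  refine ⟨fun k => φ (Pi.single k 1), funext fun t => ?_⟩
  have ht := LinearMap.congr_fun hφ (Pi.single t 1)
  simp only [LinearMap.dualMap_apply, Matrix.mulVecLin_apply, Matrix.mulVec_single_one,
    LinearMap.proj_apply] at ht
  rw [Pi.single_comm, ← ht, LinearMap.pi_apply_eq_sum_univ φ]
  simp only [vecMul, dotProduct]
  refine Finset.sum_congr rfl fun k _ => ?_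
  rw [mul_comm]
  congr 2
  ext j
  simp [Pi.single_apply, eq_comm]

theorem exists_smul_eq_intCast_comp {ι : Type*} [Finite ι] (x : ι → ℚ) :
    ∃ b : ℤ, b ≠ 0 ∧ ∃ u : ι → ℤ, b • x = Int.castRingHom ℚ ∘ u := by
  obtain ⟨⟨b, hb⟩, hx⟩ := IsLocalization.exist_integer_multiples_of_finite (nonZeroDivisors ℤ) x
  choose u hu using hx
  refine ⟨b, nonZeroDivisors.ne_zero hb, u, funext fun k => ?_⟩
  simpa [Algebra.smul_def, eq_comm] using hu k

theorem exists_isCovector_single_of_forall_kerZ_apply_eq_zero {m n : ℕ}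
    (A : Matrix (Fin m) (Fin n) ℤ) (i : Fin n) (h : ∀ u ∈ kerZ A, u i = 0) :
    ∃ b ≠ 0, IsCovector A (Pi.single i b) := by
  have hQ : ∀ x, A.map (Int.castRingHom ℚ) *ᵥ x = 0 → x i = 0 := by
    intro x hx
    obtain ⟨b, hb, u, hu⟩ := exists_smul_eq_intCast_comp x
    have hu0 : u ∈ kerZ A := funext fun s => by
      have hs := RingHom.map_mulVec (Int.castRingHom ℚ) A u s
      rw [← hu, mulVec_smul, hx] at hs
      simpa using hs
    simpa [hb, h u hu0] using congrFun hu i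
  obtain ⟨c, hc⟩ := (A.map _).exists_vecMul_eq_single_of_forall_mulVec_eq_zero i hQ
  obtain ⟨b, hb, v, hv⟩ := exists_smul_eq_intCast_comp c
  refine ⟨b, hb, v, funext fun t => ?_⟩
  have ht := RingHom.map_vecMul (Int.castRingHom ℚ) A v t
  rw [← hv, smul_vecMul, hc] at ht
  rw [mulVec_transpose]
  apply Int.cast_injective (α := ℚ)
  simpa [Pi.single_apply, apply_ite] using ht.symm

theorem IsCovector.dotProduct_eq_zero {m n : ℕ} {A : Matrix (Fin m) (Fin n) ℤ}
    {w u : Fin n → ℤ} (hw : IsCovector A w) (hu : u ∈ kerZ A) : w ⬝ᵥ u = 0 := by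
  obtain ⟨v, rfl⟩ := hw
  rw [mulVec_transpose, ← dotProduct_mulVec, show A *ᵥ u = 0 from hu, dotProduct_zero]

theorem IsCovector.smul_row_add_smul_row_eq_zero {m n : ℕ} {ι : Type*}
    {A : Matrix (Fin m) (Fin n) ℤ} {G : Matrix (Fin n) ι ℤ} {w : Fin n → ℤ}
    (hw : IsCovector A w) (hG : ∀ l, (fun k => G k l) ∈ kerZ A) {i j : Fin n} (hij : i ≠ j)
    (hsupp : Function.support w ⊆ {i, j}) : w i • G i + w j • G j = 0 := by
  funext l
  have hl := hw.dotProduct_eq_zero (hG l)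
  rw [dotProduct, Fintype.sum_eq_add i j hij] at hl
  · simpa using hl
  · rintro k ⟨hki, hkj⟩
    refine mul_eq_zero_of_left (Function.notMem_support.1 fun hk => ?_) _
    rcases hsupp hk with rfl | rfl <;> contradiction

theorem IsGaleTransform.apply_eq_zero_of_row_eq_zero {m n r : ℕ} {A : Matrix (Fin m) (Fin n) ℤ}
    {G : Matrix (Fin n) (Fin (n - r)) ℤ} (hG : IsGaleTransform A G) {i : Fin n} (hi : G i = 0)
    {u : Fin n → ℤ} (hu : u ∈ kerZ A) : u i = 0 := by
  obtain ⟨lam, hlam, -⟩ := hG.2 u hu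
  simp [hlam, hi]

theorem IsCocircuit.row_ne_zero {m n r : ℕ} {A : Matrix (Fin m) (Fin n) ℤ}
    {G : Matrix (Fin n) (Fin (n - r)) ℤ} (hG : IsGaleTransform A G) {w : Fin n → ℤ}
    (hw : IsCocircuit A w) {i j : Fin n} (hij : i ≠ j)
    (hsupp : Function.support w = {i, j}) : G i ≠ 0 := by
  intro hi
  obtain ⟨b, hb, hcov⟩ := exists_isCovector_single_of_forall_kerZ_apply_eq_zero A i
    fun u hu => hG.apply_eq_zero_of_row_eq_zero hi hu
  refine hw.2.2 _ hcov (by simpa using hb) ?_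
  rw [hsupp, Pi.support_single_of_ne hb, Set.pair_comm]
  exact Set.ssubset_insert (Set.mem_singleton_iff.not.2 hij.symm)

theorem cocircuit_pair_sign_iff_gale_general {m n : ℕ}
    (A : Matrix (Fin m) (Fin n) ℤ) (r : ℕ)
    (G : Matrix (Fin n) (Fin (n - r)) ℤ) (hG : IsGaleTransform A G)
    (i j : Fin n) (hij : i ≠ j)
    (w : Fin n → ℤ) (hw : IsCocircuit A w)
    (hsupp : Function.support w = ({i, j} : Set (Fin n))) :
    (w i * w j < 0 ↔ ∃ p q : ℤ, 0 < p ∧ 0 < q ∧ p • G i = q • G j) ∧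
    (0 < w i * w j ↔ ∃ p q : ℤ, 0 < p ∧ 0 < q ∧ p • G i = -(q • G j)) := by
  have hwj : w j ≠ 0 := Function.mem_support.1 (hsupp ▸ Set.mem_insert_of_mem i rfl)
  have horth := hw.1.smul_row_add_smul_row_eq_zero hG.1 hij hsupp.subset
  have hGi := hw.row_ne_zero hG hij hsupp
  exact ⟨(exists_pos_smul_eq_pos_smul_iff_mul_neg hGi hwj horth).symm,
    (exists_pos_smul_eq_neg_pos_smul_iff_mul_pos hGi hwj horth).symm⟩

theorem cocircuit_pair_sign_iff_gale {m n : ℕ}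
    (A : Matrix (Fin m) (Fin n) ℤ) (r : ℕ)
    (hr : r = (A.map (fun x : ℤ => (x : ℚ))).rank)
    (G : Matrix (Fin n) (Fin (n - r)) ℤ) (hG : IsGaleTransform A G)
    (i j : Fin n) (hij : i ≠ j)
    (w : Fin n → ℤ) (hw : IsCocircuit A w)
    (hsupp : Function.support w = ({i, j} : Set (Fin n))) :
    (w i * w j < 0 ↔ ∃ p q : ℤ, 0 < p ∧ 0 < q ∧ p • G i = q • G j) ∧
    (0 < w i * w j ↔ ∃ p q : ℤ, 0 < p ∧ 0 < q ∧ p • G i = -(q • G j)) :=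
  cocircuit_pair_sign_iff_gale_general A r G hG i j hij w hw hsupp
end

section
/- Let A : Matrix (Fin m) (Fin n) ℤ with a bouquet decomposition c_1, …, c_s, bouquet matrix A_B, and map B(u) = Σ_i u_i • c_i. Then: (i) for every u : Fin s → ℤ, u ∈ ker_ℤ(A_B) if and only if B(u) ∈ ker_ℤ(A); (ii) the map B is injective on ℤ^s; (iii) every v ∈ ker_ℤ(A) equals B(u) for some u ∈ ker_ℤ(A_B). In particular, B restricts to a bijection from ker_ℤ(A_B) onto ker_ℤ(A). -/
/-- The componentwise positive part `u⁺` of an integer vector. -/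
def posPartZ {n : ℕ} (u : Fin n → ℤ) : Fin n → ℤ := fun i => max (u i) 0

/-- The componentwise negative part `u⁻` of an integer vector. -/
def negPartZ {n : ℕ} (u : Fin n → ℤ) : Fin n → ℤ := fun i => max (-u i) 0

/-- `u = v + w` is a proper conformal decomposition within `kerZ A`. -/
def IsProperConformalDecomp {m n : ℕ} (A : Matrix (Fin m) (Fin n) ℤ)
    (u v w : Fin n → ℤ) : Prop :=
  v ∈ kerZ A ∧ w ∈ kerZ A ∧ v ≠ 0 ∧ w ≠ 0 ∧ u = v + w ∧
    posPartZ u = posPartZ v + posPartZ w ∧ negPartZ u = negPartZ v + negPartZ w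

/-- `u` belongs to the Graver basis of `A`: it is a nonzero element of the integer
kernel admitting no proper conformal decomposition. -/
def InGraver {m n : ℕ} (A : Matrix (Fin m) (Fin n) ℤ) (u : Fin n → ℤ) : Prop :=
  u ∈ kerZ A ∧ u ≠ 0 ∧ ¬ ∃ v w, IsProperConformalDecomp A u v w

/-- `u = v + w` is a proper semiconformal decomposition within `kerZ A`. -/
def IsProperSemiconformalDecomp {m n : ℕ} (A : Matrix (Fin m) (Fin n) ℤ)
    (u v w : Fin n → ℤ) : Prop :=
  v ∈ kerZ A ∧ w ∈ kerZ A ∧ v ≠ 0 ∧ w ≠ 0 ∧ u = v + w ∧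
    ∀ i, (0 < v i → 0 ≤ w i) ∧ (w i < 0 → v i ≤ 0)

/-- `c 0, …, c (s-1)` is a bouquet decomposition of `A`: the supports are nonempty,
pairwise disjoint and cover `Fin n`, and every integer kernel element of `A` is,
on the support of each `c i`, an integer multiple of `c i`. -/
def IsBouquetDecomposition {m n s : ℕ} (A : Matrix (Fin m) (Fin n) ℤ)
    (c : Fin s → Fin n → ℤ) : Prop :=
  (∀ i, (Function.support (c i)).Nonempty) ∧
  (∀ i i', i ≠ i' → Disjoint (Function.support (c i)) (Function.support (c i'))) ∧
  (∀ j, ∃ i, c i j ≠ 0) ∧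
  (∀ v ∈ kerZ A, ∀ i, ∃ t : ℤ, ∀ j ∈ Function.support (c i), v j = t * c i j)

/-- The bouquet matrix `A_B`, whose `i`-th column is `A.mulVec (c i)`. -/
def bouquetMatrix {m n s : ℕ} (A : Matrix (Fin m) (Fin n) ℤ)
    (c : Fin s → Fin n → ℤ) : Matrix (Fin m) (Fin s) ℤ :=
  Matrix.of fun k i => A.mulVec (c i) k

/-- The map `B(u) = Σ_i u_i • c_i`. -/
def Bmap {n s : ℕ} (c : Fin s → Fin n → ℤ) (u : Fin s → ℤ) : Fin n → ℤ :=
  ∑ i, u i • c i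


lemma Bmap_apply_of_mem_support {n s : ℕ} (c : Fin s → Fin n → ℤ)
    (hd : ∀ i i', i ≠ i' → Disjoint (Function.support (c i)) (Function.support (c i')))
    (u : Fin s → ℤ) {i : Fin s} {j : Fin n} (hj : c i j ≠ 0) :
    Bmap c u j = u i * c i j := by
  have : Bmap c u j = ∑ i', u i' * c i' j := by
    simp [Bmap, Finset.sum_apply]
  rw [this]
  refine Finset.sum_eq_single i (fun i' _ hne => ?_) (by simp)
  have := hd i' i hne
  have hji' : c i' j = 0 := by
    by_contra h
    exact (Set.disjoint_left.mp this h) hj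
  simp [hji']

lemma mulVec_Bmap {m n s : ℕ} (A : Matrix (Fin m) (Fin n) ℤ)
    (c : Fin s → Fin n → ℤ) (u : Fin s → ℤ) :
    A.mulVec (Bmap c u) = (bouquetMatrix A c).mulVec u := by
  funext k
  have : A.mulVec (Bmap c u) = ∑ i, u i • A.mulVec (c i) := by
    simp only [Bmap]
    rw [show A.mulVec = A.mulVecLin from rfl, map_sum]
    simp only [map_smul, Matrix.mulVecLin_apply]
  rw [this]
  simp [Matrix.mulVec, dotProduct, bouquetMatrix, Finset.sum_apply, mul_comm]

theorem kernel_bijection_of_bouquetDecomposition {m n s : ℕ}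
    (A : Matrix (Fin m) (Fin n) ℤ) (c : Fin s → Fin n → ℤ)
    (hc : IsBouquetDecomposition A c) :
    (∀ u : Fin s → ℤ, u ∈ kerZ (bouquetMatrix A c) ↔ Bmap c u ∈ kerZ A) ∧
    Function.Injective (Bmap c) ∧
    (∀ v ∈ kerZ A, ∃ u ∈ kerZ (bouquetMatrix A c), Bmap c u = v) ∧
    Set.BijOn (Bmap c) (kerZ (bouquetMatrix A c)) (kerZ A) := by
  obtain ⟨hne, hd, hcov, hmul⟩ := hc
  have h1 : ∀ u : Fin s → ℤ, u ∈ kerZ (bouquetMatrix A c) ↔ Bmap c u ∈ kerZ A := by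
    intro u
    simp only [kerZ, Set.mem_setOf_eq, mulVec_Bmap A c u]
  have h2 : Function.Injective (Bmap c) := by
    intro u u' h
    funext i
    obtain ⟨j, hj⟩ := hne i
    have hj' : c i j ≠ 0 := hj
    have e1 := Bmap_apply_of_mem_support c hd u hj'
    have e2 := Bmap_apply_of_mem_support c hd u' hj'
    have : u i * c i j = u' i * c i j := by rw [← e1, ← e2, h]
    exact mul_right_cancel₀ hj' this
  have h3 : ∀ v ∈ kerZ A, ∃ u ∈ kerZ (bouquetMatrix A c), Bmap c u = v := by
    intro v hv
    choose t ht using hmul v hv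
    refine ⟨t, ?_, ?_⟩
    · rw [h1]
      have : Bmap c t = v := by
        funext j
        obtain ⟨i, hij⟩ := hcov j
        rw [Bmap_apply_of_mem_support c hd t hij, ← ht i j hij]
      rw [this]; exact hv
    · funext j
      obtain ⟨i, hij⟩ := hcov j
      rw [Bmap_apply_of_mem_support c hd t hij, ← ht i j hij]
  refine ⟨h1, h2, h3, ?_, h2.injOn, ?_⟩
  · intro u hu
    exact (h1 u).mp hu
  · intro v hv
    obtain ⟨u, hu, huv⟩ := h3 v hv
    exact ⟨u, hu, huv⟩
end

section
/- Let A : Matrix (Fin m) (Fin n) ℤ with a bouquet decomposition c_1, …, c_s, bouquet matrix A_B, and map B(u) = Σ_i u_i • c_i. Then for every u : Fin s → ℤ, u belongs to the Graver basis Gr(A_B) if and only if B(u) belongs to the Graver basis Gr(A); consequently Gr(A) = {B(u) | u ∈ Gr(A_B)} and B restricts to a bijection from Gr(A_B) onto Gr(A). -/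
private lemma nn_aux {a d : ℤ} (hd : 0 < d) (h : 0 ≤ a * d) : 0 ≤ a :=
  nonneg_of_mul_nonneg_right (mul_comm a d ▸ h) hd

private lemma np_aux {a d : ℤ} (hd : 0 < d) (h : a * d ≤ 0) : a ≤ 0 := by
  have := nn_aux (a := -a) hd (by rw [neg_mul]; linarith)
  linarith

private lemma sign_cancel {a b d : ℤ} (hd : d ≠ 0)
    (h : (0 ≤ a * d ∧ 0 ≤ b * d) ∨ (a * d ≤ 0 ∧ b * d ≤ 0)) :
    (0 ≤ a ∧ 0 ≤ b) ∨ (a ≤ 0 ∧ b ≤ 0) := by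
  rcases lt_or_gt_of_ne hd with hd | hd
  · have hd' : 0 < -d := by linarith
    rcases h with ⟨h1, h2⟩ | ⟨h1, h2⟩
    · exact Or.inr ⟨np_aux hd' (by rw [mul_neg]; linarith),
        np_aux hd' (by rw [mul_neg]; linarith)⟩
    · exact Or.inl ⟨nn_aux hd' (by rw [mul_neg]; linarith),
        nn_aux hd' (by rw [mul_neg]; linarith)⟩
  · rcases h with ⟨h1, h2⟩ | ⟨h1, h2⟩
    · exact Or.inl ⟨nn_aux hd h1, nn_aux hd h2⟩
    · exact Or.inr ⟨np_aux hd h1, np_aux hd h2⟩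

private lemma sign_mul' {a b d : ℤ}
    (h : (0 ≤ a ∧ 0 ≤ b) ∨ (a ≤ 0 ∧ b ≤ 0)) :
    (0 ≤ a * d ∧ 0 ≤ b * d) ∨ (a * d ≤ 0 ∧ b * d ≤ 0) := by
  rcases le_total 0 d with hd | hd <;> rcases h with ⟨h1, h2⟩ | ⟨h1, h2⟩
  · exact Or.inl ⟨mul_nonneg h1 hd, mul_nonneg h2 hd⟩
  · exact Or.inr ⟨mul_nonpos_of_nonpos_of_nonneg h1 hd,
      mul_nonpos_of_nonpos_of_nonneg h2 hd⟩
  · exact Or.inr ⟨mul_nonpos_of_nonneg_of_nonpos h1 hd,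
      mul_nonpos_of_nonneg_of_nonpos h2 hd⟩
  · exact Or.inl ⟨by nlinarith, by nlinarith⟩

private lemma conformal_iff {k : ℕ} (x y : Fin k → ℤ) :
    (posPartZ (x + y) = posPartZ x + posPartZ y ∧
      negPartZ (x + y) = negPartZ x + negPartZ y)
      ↔ ∀ j, (0 ≤ x j ∧ 0 ≤ y j) ∨ (x j ≤ 0 ∧ y j ≤ 0) := by
  constructor
  · rintro ⟨h1, h2⟩ j
    have e1 := congrFun h1 j
    have e2 := congrFun h2 j
    simp only [posPartZ, negPartZ, Pi.add_apply] at e1 e2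
    omega
  · intro h
    refine ⟨funext fun j => ?_, funext fun j => ?_⟩ <;>
      · have := h j
        simp only [posPartZ, negPartZ, Pi.add_apply]
        omega

private lemma Bmap_add {n s : ℕ} (c : Fin s → Fin n → ℤ) (u v : Fin s → ℤ) :
    Bmap c (u + v) = Bmap c u + Bmap c v := by
  funext j
  simp [Bmap, Finset.sum_apply, add_mul, Finset.sum_add_distrib]

private lemma Bmap_zero {n s : ℕ} (c : Fin s → Fin n → ℤ) : Bmap c 0 = 0 := by
  simp [Bmap]

theorem graver_bijection_of_bouquetDecomposition {m n s : ℕ}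
    (A : Matrix (Fin m) (Fin n) ℤ) (c : Fin s → Fin n → ℤ)
    (hc : IsBouquetDecomposition A c) :
    (∀ u : Fin s → ℤ, InGraver (bouquetMatrix A c) u ↔ InGraver A (Bmap c u)) ∧
    {v : Fin n → ℤ | InGraver A v} =
      Bmap c '' {u : Fin s → ℤ | InGraver (bouquetMatrix A c) u} ∧
    Set.BijOn (Bmap c) {u : Fin s → ℤ | InGraver (bouquetMatrix A c) u}
      {v : Fin n → ℤ | InGraver A v} := by
  obtain ⟨hne, hdisj, hcov, hker⟩ := hc
  choose idx hidx using hcov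
  -- uniqueness of the index
  have huniq : ∀ i j, c i j ≠ 0 → i = idx j := by
    intro i j h
    by_contra hne'
    exact (Set.disjoint_left.mp (hdisj i (idx j) hne')
      (Function.mem_support.mpr h)) (Function.mem_support.mpr (hidx j))
  -- evaluation of Bmap
  have hBapply : ∀ (u : Fin s → ℤ) (j : Fin n),
      Bmap c u j = u (idx j) * c (idx j) j := by
    intro u j
    have : Bmap c u j = ∑ i, u i * c i j := by
      simp [Bmap, Finset.sum_apply]
    rw [this]
    apply Finset.sum_eq_single (idx j)
    · intro i _ hi
      have : c i j = 0 := by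
        by_contra h
        exact hi (huniq i j h)
      simp [this]
    · simp
  -- injectivity
  have hBinj : Function.Injective (Bmap c) := by
    intro u u' h
    funext i
    obtain ⟨j, hj⟩ := hne i
    have hj' : c i j ≠ 0 := Function.mem_support.mp hj
    have hij := huniq i j hj'
    have := congrFun h j
    rw [hBapply u j, hBapply u' j, ← hij] at this
    exact mul_right_cancel₀ hj' this
  -- kernel correspondence
  have hBker : ∀ u, A.mulVec (Bmap c u) = (bouquetMatrix A c).mulVec u := by
    intro u
    funext k
    simp only [Matrix.mulVec, dotProduct, bouquetMatrix, Matrix.of_apply, Bmap,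
      Finset.sum_apply, Pi.smul_apply, smul_eq_mul, Finset.mul_sum, Finset.sum_mul]
    rw [Finset.sum_comm]
    exact Finset.sum_congr rfl fun i _ => Finset.sum_congr rfl fun j _ => by ring
  have hkerIff : ∀ u, u ∈ kerZ (bouquetMatrix A c) ↔ Bmap c u ∈ kerZ A := by
    intro u
    simp only [kerZ, Set.mem_setOf_eq, hBker u]
  -- surjectivity onto the kernel
  have hSurj : ∀ v ∈ kerZ A, ∃ u, Bmap c u = v := by
    intro v hv
    choose t ht using hker v hv
    refine ⟨t, funext fun j => ?_⟩
    rw [hBapply]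
    exact (ht (idx j) j (Function.mem_support.mpr (hidx j))).symm
  -- sign transfer
  have hsignB : ∀ (v w : Fin s → ℤ),
      (∀ i, (0 ≤ v i ∧ 0 ≤ w i) ∨ (v i ≤ 0 ∧ w i ≤ 0)) ↔
      (∀ j, (0 ≤ Bmap c v j ∧ 0 ≤ Bmap c w j) ∨ (Bmap c v j ≤ 0 ∧ Bmap c w j ≤ 0)) := by
    intro v w
    constructor
    · intro h j
      rw [hBapply, hBapply]
      exact sign_mul' (h (idx j))
    · intro h i
      obtain ⟨j, hj⟩ := hne i
      have hj' : c i j ≠ 0 := Function.mem_support.mp hj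
      have hij := huniq i j hj'
      have := h j
      rw [hBapply, hBapply, ← hij] at this
      exact sign_cancel hj' this
  -- nonzero transfer
  have hB0 : ∀ u : Fin s → ℤ, u ≠ 0 ↔ Bmap c u ≠ 0 := by
    intro u
    constructor
    · intro h h0
      exact h (hBinj (by rw [h0, Bmap_zero]))
    · intro h h0
      exact h (by rw [h0, Bmap_zero])
  -- the central iff
  have hiff : ∀ u : Fin s → ℤ,
      InGraver (bouquetMatrix A c) u ↔ InGraver A (Bmap c u) := by
    intro u
    constructor
    · rintro ⟨hk, hu0, hnd⟩
      refine ⟨(hkerIff u).mp hk, (hB0 u).mp hu0, ?_⟩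
      rintro ⟨V, W, hVk, hWk, hV0, hW0, hsum, hpos, hneg⟩
      obtain ⟨v, rfl⟩ := hSurj V hVk
      obtain ⟨w, rfl⟩ := hSurj W hWk
      have huvw : u = v + w := hBinj (by rw [hsum, Bmap_add])
      apply hnd
      refine ⟨v, w, (hkerIff v).mpr hVk, (hkerIff w).mpr hWk,
        (hB0 v).mpr hV0, (hB0 w).mpr hW0, huvw, ?_⟩
      have hBsum : Bmap c u = Bmap c v + Bmap c w := by rw [huvw, Bmap_add]
      have hsigns : ∀ j, (0 ≤ Bmap c v j ∧ 0 ≤ Bmap c w j) ∨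
          (Bmap c v j ≤ 0 ∧ Bmap c w j ≤ 0) :=
        (conformal_iff (Bmap c v) (Bmap c w)).mp (by rw [← hBsum]; exact ⟨hpos, hneg⟩)
      have := (conformal_iff v w).mpr ((hsignB v w).mpr hsigns)
      rw [← huvw] at this
      exact this
    · rintro ⟨hk, hu0, hnd⟩
      refine ⟨(hkerIff u).mpr hk, (hB0 u).mpr hu0, ?_⟩
      rintro ⟨v, w, hvk, hwk, hv0, hw0, huvw, hpos, hneg⟩
      apply hnd
      refine ⟨Bmap c v, Bmap c w, (hkerIff v).mp hvk, (hkerIff w).mp hwk,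
        (hB0 v).mp hv0, (hB0 w).mp hw0, by rw [huvw, Bmap_add], ?_⟩
      have hsigns : ∀ i, (0 ≤ v i ∧ 0 ≤ w i) ∨ (v i ≤ 0 ∧ w i ≤ 0) :=
        (conformal_iff v w).mp (by rw [← huvw]; exact ⟨hpos, hneg⟩)
      have := (conformal_iff (Bmap c v) (Bmap c w)).mpr ((hsignB v w).mp hsigns)
      rw [← Bmap_add, ← huvw] at this
      exact this
  -- set equality
  have hset : {v : Fin n → ℤ | InGraver A v} =
      Bmap c '' {u : Fin s → ℤ | InGraver (bouquetMatrix A c) u} := by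
    ext v
    simp only [Set.mem_setOf_eq, Set.mem_image]
    constructor
    · intro hv
      obtain ⟨u, rfl⟩ := hSurj v hv.1
      exact ⟨u, (hiff u).mpr hv, rfl⟩
    · rintro ⟨u, hu, rfl⟩
      exact (hiff u).mp hu
  refine ⟨hiff, hset, ?_, hBinj.injOn, ?_⟩
  · intro u hu
    exact (hiff u).mp hu
  · rw [hset]
    exact Set.surjOn_image _ _
end

section
/- Let m, s be positive natural numbers, let a_1, …, a_s : Fin m → ℤ be arbitrary vectors, and for each i ∈ Fin s let m_i ≥ 1 and let c_i : Fin m_i → ℤ have all coordinates nonzero, greatest common divisor of its coordinates equal to 1, and first coordinate positive. Set q = Σ_i m_i and p = m + Σ_i (m_i − 1), partition Fin q in order into blocks of sizes m_1, …, m_s, and let ĉ_i : Fin q → ℤ be the vector equal to c_i on the i-th block and 0 elsewhere. Then there exists a matrix A : Matrix (Fin p) (Fin q) ℤ such that: (i) for each i, A.mulVec ĉ_i is the vector whose first m coordinates are a_i and whose remaining p − m coordinates are 0; (ii) for every v ∈ ker_ℤ(A) and every i there is an integer t such that v agrees with t · ĉ_i on the i-th block; consequently, the map u ↦ Σ_i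 u_i • ĉ_i is a bijection from ker_ℤ(D) onto ker_ℤ(A), where D : Matrix (Fin m) (Fin s) ℤ is the matrix with columns a_1, …, a_s. -/
/-- The index in `Fin (∑ k, msz k)` of the `j`-th entry of the `i`-th block, when
`Fin (∑ k, msz k)` is partitioned in order into blocks of sizes `msz 0, …, msz (s-1)`. -/
def blockIdx {s : ℕ} (msz : Fin s → ℕ) (i : Fin s) (j : Fin (msz i)) :
    Fin (∑ k, msz k) :=
  ⟨(∑ k ∈ Finset.univ.filter (fun k => k < i), msz k) + (j : ℕ), by
    have h1 : (∑ k ∈ Finset.univ.filter (fun k => k < i), msz k) +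
        (∑ k ∈ Finset.univ.filter (fun k => ¬ k < i), msz k) = ∑ k, msz k := by
      exact Finset.sum_filter_add_sum_filter_not _ _ _
    have h2 : msz i ≤ ∑ k ∈ Finset.univ.filter (fun k => ¬ k < i), msz k := by
      refine Finset.single_le_sum (fun _ _ => Nat.zero_le _) ?_
      simp
    have h3 : (j : ℕ) < msz i := j.isLt
    omega⟩

open Matrix

theorem blockIdx_eq_finSigmaFinEquiv {s : ℕ} (msz : Fin s → ℕ) (i : Fin s) (j : Fin (msz i)) :
    blockIdx msz i j = finSigmaFinEquiv ⟨i, j⟩ := by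
  ext
  simp only [finSigmaFinEquiv_apply, blockIdx, add_left_inj, Finset.filter_gt_eq_Iio]
  refine Eq.trans ?_ (Finset.sum_map _ (Fin.castLEEmb i.isLt.le) msz)
  congr 1
  ext k
  simp only [Finset.mem_map, Finset.mem_univ, true_and, Fin.coe_castLEEmb, Finset.mem_Iio]
  exact ⟨fun hk => ⟨⟨k, hk⟩, rfl⟩, fun ⟨a, ha⟩ => ha ▸ a.isLt⟩

theorem Sum.elim_zero_finSumFinEquiv_symm {R : Type*} [Zero R] {m n : ℕ} (f : Fin m → R)
    (k : Fin (m + n)) :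
    Sum.elim f 0 (finSumFinEquiv.symm k) = if h : (k : ℕ) < m then f ⟨k, h⟩ else 0 := by
  induction k using Fin.addCases with
  | left k => simp
  | right k => simp

theorem reindex_mulVec {R l m n o : Type*} [NonUnitalNonAssocSemiring R] [Fintype n]
    [Fintype o] (e₁ : m ≃ l) (e₂ : n ≃ o) (M : Matrix m n R) (v : o → R) :
    reindex e₁ e₂ M *ᵥ v = (M *ᵥ (v ∘ e₂)) ∘ e₁.symm := by
  rw [reindex_apply, submatrix_mulVec_equiv, Equiv.symm_symm]

theorem reindex_mulVec_eq_zero_iff {R l m n o : Type*} [NonUnitalNonAssocSemiring R]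
    [Fintype n] [Fintype o] (e₁ : m ≃ l) (e₂ : n ≃ o) (M : Matrix m n R) (v : o → R) :
    reindex e₁ e₂ M *ᵥ v = 0 ↔ M *ᵥ (v ∘ e₂) = 0 := by
  rw [reindex_mulVec]
  exact ⟨fun h => funext fun x => by simpa using congrFun h (e₁ x), fun h => by rw [h]; rfl⟩

theorem blockDiagonal'_mulVec_apply {ι R : Type*} [Fintype ι] [DecidableEq ι] [Semiring R]
    {m n : ι → Type*} [∀ i, Fintype (n i)] (M : ∀ i, Matrix (m i) (n i) R)
    (v : (Σ i, n i) → R) (x : Σ i, m i) :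
    (blockDiagonal' M *ᵥ v) x = (M x.1 *ᵥ fun j => v ⟨x.1, j⟩) x.2 := by
  obtain ⟨i, r⟩ := x
  simp only [mulVec, dotProduct, Fintype.sum_sigma]
  rw [Finset.sum_eq_single i]
  · simp [blockDiagonal'_apply_eq]
  · intro i' _ hi'
    simp [blockDiagonal'_apply_ne _ _ _ hi'.symm]
  · simp

theorem mul_eq_mul_trans_of_ne_zero {R : Type*} [CommRing R] [IsDomain R]
    {c₁ c₂ c₃ v₁ v₂ v₃ : R} (hc₂ : c₂ ≠ 0) (h₁₂ : c₂ * v₁ = c₁ * v₂)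
    (h₂₃ : c₃ * v₂ = c₂ * v₃) : c₃ * v₁ = c₁ * v₃ :=
  mul_left_cancel₀ hc₂ (by linear_combination c₃ * h₁₂ + c₁ * h₂₃)

theorem eq_dotProduct_smul_of_mul_eq_mul {R ι : Type*} [CommRing R] [Fintype ι]
    {lam c v : ι → R} (hlam : lam ⬝ᵥ c = 1) (h : ∀ j k, c k * v j = c j * v k) :
    v = (lam ⬝ᵥ v) • c := by
  ext k
  calc v k = (lam ⬝ᵥ c) * v k := by rw [hlam, one_mul]
    _ = ∑ j, lam j * (c j * v k) := by simp only [dotProduct, Finset.sum_mul, mul_assoc]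
    _ = ∑ j, lam j * v j * c k := by
        refine Finset.sum_congr rfl fun j _ => ?_
        rw [← h, mul_comm (c k), mul_assoc]
    _ = ((lam ⬝ᵥ v) • c) k := by rw [Pi.smul_apply, smul_eq_mul, dotProduct, Finset.sum_mul]

section ConsecutiveMinors

variable {R : Type*} [CommRing R]

/-- Row `r` pairs with `v` to the `2 × 2` minor on columns `r, r + 1` of the matrix with rows
`c` and `v`. -/
def consecutiveMinors : {n : ℕ} → (Fin n → R) → Matrix (Fin (n - 1)) (Fin n) R
  | 0, _ => 0
  | _ + 1, c => of fun r => c r.succ • Pi.single r.castSucc 1 - c r.castSucc • Pi.single r.succ 1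

theorem consecutiveMinors_mulVec_apply {k : ℕ} (c v : Fin (k + 1) → R) (r : Fin k) :
    (consecutiveMinors c *ᵥ v) r = c r.succ * v r.castSucc - c r.castSucc * v r.succ := by
  change (c r.succ • Pi.single r.castSucc 1 - c r.castSucc • Pi.single r.succ 1) ⬝ᵥ v = _
  rw [sub_dotProduct, smul_dotProduct, smul_dotProduct,
    single_dotProduct, single_dotProduct, one_mul, one_mul, smul_eq_mul, smul_eq_mul]

theorem consecutiveMinors_mulVec_self {n : ℕ} (c : Fin n → R) : consecutiveMinors c *ᵥ c = 0 := by
  cases n with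
  | zero => ext r; exact r.elim0
  | succ k =>
    ext r
    rw [consecutiveMinors_mulVec_apply, Pi.zero_apply]
    ring

theorem mul_eq_mul_of_consecutiveMinors_mulVec_eq_zero [IsDomain R] {n : ℕ} {c v : Fin n → R}
    (hc : ∀ j, c j ≠ 0) (hv : consecutiveMinors c *ᵥ v = 0) (j k : Fin n) :
    c k * v j = c j * v k := by
  cases n with
  | zero => exact j.elim0
  | succ n =>
    have hstep (r : Fin n) : c r.succ * v r.castSucc = c r.castSucc * v r.succ := by
      rw [← sub_eq_zero, ← consecutiveMinors_mulVec_apply, hv, Pi.zero_apply]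
    have hzero (j : Fin (n + 1)) : c j * v 0 = c 0 * v j := by
      induction j using Fin.induction with
      | zero => rfl
      | succ r ih => exact mul_eq_mul_trans_of_ne_zero (hc r.castSucc) ih (hstep r)
    exact mul_eq_mul_trans_of_ne_zero (hc 0) (hzero j).symm (hzero k)

theorem consecutiveMinors_mulVec_eq_zero_iff [IsDomain R] {n : ℕ} {c lam v : Fin n → R}
    (hc : ∀ j, c j ≠ 0) (hlam : lam ⬝ᵥ c = 1) :
    consecutiveMinors c *ᵥ v = 0 ↔ v = (lam ⬝ᵥ v) • c := by
  refine ⟨fun hv => eq_dotProduct_smul_of_mul_eq_mul hlam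
    (mul_eq_mul_of_consecutiveMinors_mulVec_eq_zero hc hv), fun hv => ?_⟩
  rw [hv, mulVec_smul, consecutiveMinors_mulVec_self, smul_zero]

end ConsecutiveMinors

section LawrenceMatrix

variable {R ι κ : Type*} [CommRing R] {n : ι → ℕ}

def blockLift (c : ∀ i, Fin (n i) → R) (u : ι → R) : (Σ i, Fin (n i)) → R :=
  fun x => u x.1 * c x.1 x.2

def blockDot (lam : ∀ i, Fin (n i) → R) (v : (Σ i, Fin (n i)) → R) : ι → R :=
  fun i => lam i ⬝ᵥ fun j => v ⟨i, j⟩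

theorem blockDot_blockLift {lam c : ∀ i, Fin (n i) → R} (hlam : ∀ i, lam i ⬝ᵥ c i = 1)
    (u : ι → R) : blockDot lam (blockLift c u) = u := by
  ext i
  change lam i ⬝ᵥ (u i • c i) = u i
  rw [dotProduct_smul, hlam, smul_eq_mul, mul_one]

variable [Fintype ι] [DecidableEq ι]

/-- The top rows send `blockLift c u` to `D *ᵥ u` because `lam i ⬝ᵥ c i = 1`; the bottom rows
cut out, on each block, the multiples of `c i`. -/
def lawrenceMatrix (D : Matrix κ ι R) (lam c : ∀ i, Fin (n i) → R) :
    Matrix (κ ⊕ Σ i, Fin (n i - 1)) (Σ i, Fin (n i)) R :=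
  fromRows (of fun k x => D k x.1 * lam x.1 x.2) (blockDiagonal' fun i => consecutiveMinors (c i))

theorem lawrenceMatrix_mulVec (D : Matrix κ ι R) (lam c : ∀ i, Fin (n i) → R)
    (v : (Σ i, Fin (n i)) → R) :
    lawrenceMatrix D lam c *ᵥ v = Sum.elim (D *ᵥ blockDot lam v)
      fun x => (consecutiveMinors (c x.1) *ᵥ fun j => v ⟨x.1, j⟩) x.2 := by
  rw [lawrenceMatrix, fromRows_mulVec]
  congr 1
  · ext k
    simp [mulVec, dotProduct, blockDot, Fintype.sum_sigma, Finset.mul_sum, mul_assoc]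
  · ext x
    exact blockDiagonal'_mulVec_apply _ v x

theorem lawrenceMatrix_mulVec_blockLift (D : Matrix κ ι R) {lam c : ∀ i, Fin (n i) → R}
    (hlam : ∀ i, lam i ⬝ᵥ c i = 1) (u : ι → R) :
    lawrenceMatrix D lam c *ᵥ blockLift c u = Sum.elim (D *ᵥ u) 0 := by
  rw [lawrenceMatrix_mulVec, blockDot_blockLift hlam]
  congr 1
  ext x
  change (consecutiveMinors (c x.1) *ᵥ (u x.1 • c x.1)) x.2 = 0
  rw [mulVec_smul, consecutiveMinors_mulVec_self, smul_zero, Pi.zero_apply]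

theorem blockLift_blockDot_of_lawrenceMatrix_mulVec_eq_zero [IsDomain R] (D : Matrix κ ι R)
    {lam c : ∀ i, Fin (n i) → R} (hc : ∀ i j, c i j ≠ 0) (hlam : ∀ i, lam i ⬝ᵥ c i = 1)
    {v : (Σ i, Fin (n i)) → R} (hv : lawrenceMatrix D lam c *ᵥ v = 0) :
    D *ᵥ blockDot lam v = 0 ∧ blockLift c (blockDot lam v) = v := by
  rw [lawrenceMatrix_mulVec, ← Sum.elim_zero_zero, Sum.elim_eq_iff] at hv
  refine ⟨hv.1, funext fun ⟨i, j⟩ => ?_⟩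
  have hblock := (consecutiveMinors_mulVec_eq_zero_iff (v := fun j => v ⟨i, j⟩) (hc i) (hlam i)).1
    (funext fun r => congrFun hv.2 ⟨i, r⟩)
  exact (congrFun hblock j).symm

theorem bijOn_blockLift [IsDomain R] (D : Matrix κ ι R) {lam c : ∀ i, Fin (n i) → R}
    (hc : ∀ i j, c i j ≠ 0) (hlam : ∀ i, lam i ⬝ᵥ c i = 1) :
    Set.BijOn (blockLift c) {u | D *ᵥ u = 0} {v | lawrenceMatrix D lam c *ᵥ v = 0} := by
  refine Set.InvOn.bijOn (f' := blockDot lam) ⟨fun u _ => blockDot_blockLift hlam u,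
      fun v hv => (blockLift_blockDot_of_lawrenceMatrix_mulVec_eq_zero D hc hlam hv).2⟩
    (fun u (hu : D *ᵥ u = 0) => ?_)
    (fun v hv => (blockLift_blockDot_of_lawrenceMatrix_mulVec_eq_zero D hc hlam hv).1)
  change _ = 0
  rw [lawrenceMatrix_mulVec_blockLift D hlam, hu, Sum.elim_zero_zero]

end LawrenceMatrix

section FinIndexed

variable {R : Type*} [CommRing R] {m s : ℕ} {n : Fin s → ℕ}

def lawrenceMatrixFin (D : Matrix (Fin m) (Fin s) R) (lam c : ∀ i, Fin (n i) → R) :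
    Matrix (Fin (m + ∑ k, (n k - 1))) (Fin (∑ k, n k)) R :=
  reindex ((Equiv.sumCongr (.refl _) finSigmaFinEquiv).trans finSumFinEquiv) finSigmaFinEquiv
    (lawrenceMatrix D lam c)

theorem lawrenceMatrixFin_mulVec_eq_zero_iff (D : Matrix (Fin m) (Fin s) R)
    (lam c : ∀ i, Fin (n i) → R) (v : Fin (∑ k, n k) → R) :
    lawrenceMatrixFin D lam c *ᵥ v = 0 ↔ lawrenceMatrix D lam c *ᵥ (v ∘ finSigmaFinEquiv) = 0 :=
  reindex_mulVec_eq_zero_iff _ _ _ v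

theorem lawrenceMatrixFin_mulVec_blockLift (D : Matrix (Fin m) (Fin s) R)
    {lam c : ∀ i, Fin (n i) → R} (hlam : ∀ i, lam i ⬝ᵥ c i = 1) (u : Fin s → R) :
    lawrenceMatrixFin D lam c *ᵥ (blockLift c u ∘ finSigmaFinEquiv.symm) =
      fun k : Fin (m + ∑ k, (n k - 1)) => if h : (k : ℕ) < m then (D *ᵥ u) ⟨k, h⟩ else 0 := by
  funext k
  rw [lawrenceMatrixFin, reindex_mulVec, Function.comp_assoc, Equiv.symm_comp_self,
    Function.comp_id, lawrenceMatrix_mulVec_blockLift D hlam, ← Sum.elim_zero_finSumFinEquiv_symm]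
  simp only [Function.comp_apply, Equiv.symm_trans_apply, Equiv.sumCongr_symm,
    Equiv.sumCongr_apply]
  cases finSumFinEquiv.symm k <;> rfl

theorem sum_smul_eq_blockLift_comp (c : (i : Fin s) → Fin (n i) → R)
    (hatc : Fin s → Fin (∑ k, n k) → R)
    (hhatc_block : ∀ i (j : Fin (n i)), hatc i (blockIdx n i j) = c i j)
    (hhatc_off : ∀ i (k : Fin (∑ k, n k)),
      (∀ j : Fin (n i), k ≠ blockIdx n i j) → hatc i k = 0) (u : Fin s → R) :
    ∑ i, u i • hatc i = blockLift c u ∘ finSigmaFinEquiv.symm := by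
  funext k
  obtain ⟨⟨i, j⟩, rfl⟩ := finSigmaFinEquiv.surjective k
  rw [Function.comp_apply, Equiv.symm_apply_apply, ← blockIdx_eq_finSigmaFinEquiv]
  simp only [Finset.sum_apply, Pi.smul_apply, smul_eq_mul, blockLift]
  rw [Finset.sum_eq_single i, hhatc_block]
  · intro i' _ hi'
    refine mul_eq_zero_of_right _ (hhatc_off i' _ fun j' h => hi' ?_)
    rw [blockIdx_eq_finSigmaFinEquiv, blockIdx_eq_finSigmaFinEquiv] at h
    exact congrArg Sigma.fst (finSigmaFinEquiv.injective h).symm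
  · simp

end FinIndexed

theorem generalized_lawrence_construction_general (m s : ℕ)
    (a : Fin s → Fin m → ℤ)
    (msz : Fin s → ℕ)
    (c : (i : Fin s) → Fin (msz i) → ℤ)
    (hcfull : ∀ i j, c i j ≠ 0)
    (hcprim : ∀ i, Finset.univ.gcd (c i) = 1)
    (hatc : Fin s → Fin (∑ k, msz k) → ℤ)
    (hhatc_block : ∀ i (j : Fin (msz i)), hatc i (blockIdx msz i j) = c i j)
    (hhatc_off : ∀ i (k : Fin (∑ k, msz k)),
      (∀ j : Fin (msz i), k ≠ blockIdx msz i j) → hatc i k = 0) :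
    ∃ A : Matrix (Fin (m + ∑ k, (msz k - 1))) (Fin (∑ k, msz k)) ℤ,
      (∀ i, A.mulVec (hatc i) =
        fun k : Fin (m + ∑ k, (msz k - 1)) =>
          if h : (k : ℕ) < m then a i ⟨(k : ℕ), h⟩ else 0) ∧
      (∀ v ∈ kerZ A, ∀ i, ∃ t : ℤ,
        ∀ j : Fin (msz i), v (blockIdx msz i j) = t * c i j) ∧
      Set.BijOn (fun u : Fin s → ℤ => ∑ i, u i • hatc i)
        (kerZ (Matrix.of fun k i => a i k)) (kerZ A) := by
  choose lam hlam using fun i => Finset.univ.gcd_eq_sum_mul (c i)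
  have hlam_dot (i : Fin s) : lam i ⬝ᵥ c i = 1 := by
    rw [dotProduct_comm, dotProduct, ← hlam, hcprim]
  set D : Matrix (Fin m) (Fin s) ℤ := of fun k i => a i k
  have hbij := bijOn_blockLift D hcfull hlam_dot
  have hsum := sum_smul_eq_blockLift_comp c hatc hhatc_block hhatc_off
  refine ⟨lawrenceMatrixFin D lam c, fun i => ?_, fun v hv i => ?_, ?_⟩
  · have hsingle : hatc i = blockLift c (Pi.single i 1) ∘ finSigmaFinEquiv.symm := by
      rw [← hsum]
      simp [Pi.single_apply]
    rw [hsingle, lawrenceMatrixFin_mulVec_blockLift D hlam_dot, mulVec_single_one]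
    rfl
  · obtain ⟨t, -, ht⟩ := hbij.surjOn ((lawrenceMatrixFin_mulVec_eq_zero_iff D lam c v).1 hv)
    exact ⟨t i, fun j => by rw [blockIdx_eq_finSigmaFinEquiv]; exact congrFun ht.symm ⟨i, j⟩⟩
  · rw [show (fun u => ∑ i, u i • hatc i) = finSigmaFinEquiv.arrowCongr (.refl ℤ) ∘ blockLift c
      from funext hsum]
    refine (Equiv.bijOn _ fun v => ?_).comp hbij
    exact (lawrenceMatrixFin_mulVec_eq_zero_iff D lam c _).trans (by simp [Function.comp_def])

theorem generalized_lawrence_construction (m s : ℕ) (hm : 0 < m) (hs : 0 < s)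
    (a : Fin s → Fin m → ℤ)
    (msz : Fin s → ℕ) (hmsz : ∀ i, 1 ≤ msz i)
    (c : (i : Fin s) → Fin (msz i) → ℤ)
    (hcfull : ∀ i j, c i j ≠ 0)
    (hcprim : ∀ i, Finset.univ.gcd (c i) = 1)
    (hcpos : ∀ i, 0 < c i ⟨0, hmsz i⟩)
    (hatc : Fin s → Fin (∑ k, msz k) → ℤ)
    (hhatc_block : ∀ i (j : Fin (msz i)), hatc i (blockIdx msz i j) = c i j)
    (hhatc_off : ∀ i (k : Fin (∑ k, msz k)),
      (∀ j : Fin (msz i), k ≠ blockIdx msz i j) → hatc i k = 0) :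
    ∃ A : Matrix (Fin (m + ∑ k, (msz k - 1))) (Fin (∑ k, msz k)) ℤ,
      (∀ i, A.mulVec (hatc i) =
        fun k : Fin (m + ∑ k, (msz k - 1)) =>
          if h : (k : ℕ) < m then a i ⟨(k : ℕ), h⟩ else 0) ∧
      (∀ v ∈ kerZ A, ∀ i, ∃ t : ℤ,
        ∀ j : Fin (msz i), v (blockIdx msz i j) = t * c i j) ∧
      Set.BijOn (fun u : Fin s → ℤ => ∑ i, u i • hatc i)
        (kerZ (Matrix.of fun k i => a i k)) (kerZ A) :=
  generalized_lawrence_construction_general m s a msz c hcfull hcprim hatc hhatc_block hhatc_off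
end

section
/- Let A : Matrix (Fin m) (Fin n) ℤ with a bouquet decomposition c_1, …, c_s and bouquet matrix A_B, and assume each c_i is componentwise nonnegative. Then ker_ℤ(A) contains no nonzero componentwise-nonnegative vector if and only if ker_ℤ(A_B) contains no nonzero componentwise-nonnegative vector. -/
theorem positivelyGraded_iff_bouquet_positivelyGraded {m n s : ℕ}
    (A : Matrix (Fin m) (Fin n) ℤ) (c : Fin s → Fin n → ℤ)
    (hc : IsBouquetDecomposition A c)
    (hcnonneg : ∀ i j, 0 ≤ c i j) :
    (¬ ∃ v ∈ kerZ A, v ≠ 0 ∧ ∀ j, 0 ≤ v j) ↔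
      (¬ ∃ u ∈ kerZ (bouquetMatrix A c), u ≠ 0 ∧ ∀ i, 0 ≤ u i) := by
  obtain ⟨hne, hdisj, hcover, hker⟩ := hc
  -- A ∘ Bmap = bouquetMatrix mulVec
  have hBmul : ∀ u : Fin s → ℤ, A.mulVec (Bmap c u) = (bouquetMatrix A c).mulVec u := by
    intro u
    funext k
    simp only [Bmap, Matrix.mulVec, dotProduct, bouquetMatrix, Matrix.of_apply,
      Finset.sum_apply, Pi.smul_apply, smul_eq_mul, Finset.mul_sum, Finset.sum_mul]
    rw [Finset.sum_comm]
    apply Finset.sum_congr rfl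
    intro i _
    apply Finset.sum_congr rfl
    intro j _
    ring
  have hBval : ∀ (u : Fin s → ℤ) (i : Fin s) (j : Fin n), c i j ≠ 0 →
      Bmap c u j = u i * c i j := by
    intro u i j hj
    simp only [Bmap, Finset.sum_apply, Pi.smul_apply, smul_eq_mul]
    apply Finset.sum_eq_single
    · intro k _ hk
      have hd := hdisj k i hk
      by_contra h
      have hck : c k j ≠ 0 := fun h0 => h (by rw [h0, mul_zero])
      exact (Set.disjoint_left.mp hd hck) hj
    · intro h; exact absurd (Finset.mem_univ i) h
  rw [not_iff_not]
  constructor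
  · rintro ⟨v, hv, hv0, hvpos⟩
    choose t ht using hker v hv
    refine ⟨t, ?_, ?_, ?_⟩
    · have hvB : v = Bmap c t := by
        funext j
        obtain ⟨i, hi⟩ := hcover j
        rw [hBval t i j hi]
        exact ht i j hi
      show (bouquetMatrix A c).mulVec t = 0
      rw [← hBmul, ← hvB]; exact hv
    · intro h0
      apply hv0
      funext j
      obtain ⟨i, hi⟩ := hcover j
      rw [ht i j hi, h0]
      simp
    · intro i
      obtain ⟨j, hj⟩ := hne i
      have hcj : 0 < c i j := lt_of_le_of_ne (hcnonneg i j) (Ne.symm hj)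
      have := ht i j hj
      nlinarith [hvpos j]
  · rintro ⟨u, hu, hu0, hupos⟩
    refine ⟨Bmap c u, ?_, ?_, ?_⟩
    · show A.mulVec (Bmap c u) = 0
      rw [hBmul]; exact hu
    · intro h0
      apply hu0
      funext i
      obtain ⟨j, hj⟩ := hne i
      have := hBval u i j hj
      rw [h0] at this
      simp only [Pi.zero_apply] at this
      have : u i * c i j = 0 := this.symm
      rcases mul_eq_zero.mp this with h | h
      · exact h
      · exact absurd h hj
    · intro j
      simp only [Bmap, Finset.sum_apply, Pi.smul_apply, smul_eq_mul]
      exact Finset.sum_nonneg fun i _ => mul_nonneg (hupos i) (hcnonneg i j)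
end

section
/- Let A : Matrix (Fin m) (Fin n) ℤ with a bouquet decomposition c_1, …, c_s, bouquet matrix A_B, and map B(u) = Σ_i u_i • c_i, and assume each c_i is componentwise nonnegative. Then for every nonzero u ∈ ker_ℤ(A_B): u admits a proper semiconformal decomposition in ker_ℤ(A_B) if and only if B(u) admits a proper semiconformal decomposition in ker_ℤ(A). -/
theorem semiconformal_iff_of_bouquetDecomposition {m n s : ℕ}
    (A : Matrix (Fin m) (Fin n) ℤ) (c : Fin s → Fin n → ℤ)
    (hc : IsBouquetDecomposition A c)
    (hcnonneg : ∀ i j, 0 ≤ c i j) :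
    ∀ u ∈ kerZ (bouquetMatrix A c), u ≠ 0 →
      ((∃ v w, IsProperSemiconformalDecomp (bouquetMatrix A c) u v w) ↔
        (∃ v w, IsProperSemiconformalDecomp A (Bmap c u) v w)) := by

  obtain ⟨hne, hdisj, hcover, hker⟩ := hc
  intro u hu hu0
  -- mulVec of Bmap equals bouquetMatrix.mulVec
  have hBker : ∀ x : Fin s → ℤ, A.mulVec (Bmap c x) = (bouquetMatrix A c).mulVec x := by
    intro x
    funext k
    simp only [Bmap, Matrix.mulVec, dotProduct, bouquetMatrix, Matrix.of_apply,
      Finset.sum_apply, Pi.smul_apply, smul_eq_mul, Finset.mul_sum]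
    rw [Finset.sum_comm]
    apply Finset.sum_congr rfl
    intro i _
    rw [Finset.sum_mul]
    apply Finset.sum_congr rfl
    intro j _
    ring
  have hpoint : ∀ (x : Fin s → ℤ) (i : Fin s) (j : Fin n), c i j ≠ 0 →
      Bmap c x j = x i * c i j := by
    intro x i j hj
    simp only [Bmap, Finset.sum_apply, Pi.smul_apply, smul_eq_mul]
    rw [Finset.sum_eq_single i]
    · intro k _ hk
      have hckj : c k j = 0 := by
        by_contra h
        exact Set.disjoint_left.mp (hdisj k i hk) (Function.mem_support.mpr h)
          (Function.mem_support.mpr hj)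
      simp [hckj]
    · intro h; exact absurd (Finset.mem_univ i) h
  have hpos : ∀ (i : Fin s) (j : Fin n), c i j ≠ 0 → 0 < c i j := fun i j hj =>
    lt_of_le_of_ne (hcnonneg i j) (Ne.symm hj)
  have hBadd : ∀ x y : Fin s → ℤ, Bmap c (x + y) = Bmap c x + Bmap c y := by
    intro x y
    funext j
    simp [Bmap, Finset.sum_apply, add_mul, Finset.sum_add_distrib]
  have hBne : ∀ x : Fin s → ℤ, x ≠ 0 → Bmap c x ≠ 0 := by
    intro x hx h0
    obtain ⟨i, hi⟩ := Function.ne_iff.mp hx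
    obtain ⟨j, hj⟩ := hne i
    have hj' : c i j ≠ 0 := hj
    have := hpoint x i j hj'
    rw [h0] at this
    simp only [Pi.zero_apply] at this
    exact hi (by
      have := (mul_eq_zero.mp this.symm).resolve_right hj'
      simpa using this)
  constructor
  · rintro ⟨v, w, hv, hw, hv0, hw0, huvw, hsemi⟩
    refine ⟨Bmap c v, Bmap c w, ?_, ?_, hBne v hv0, hBne w hw0, ?_, ?_⟩
    · show A.mulVec (Bmap c v) = 0
      rw [hBker]; exact hv
    · show A.mulVec (Bmap c w) = 0
      rw [hBker]; exact hw
    · rw [huvw]; exact hBadd v w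
    · intro j
      obtain ⟨i, hij⟩ := hcover j
      have hcij := hpos i j hij
      have hvj := hpoint v i j hij
      have hwj := hpoint w i j hij
      constructor
      · intro h
        rw [hvj] at h
        have hvi : 0 < v i := by nlinarith
        have := (hsemi i).1 hvi
        rw [hwj]
        exact mul_nonneg this hcij.le
      · intro h
        rw [hwj] at h
        have hwi : w i < 0 := by nlinarith
        have := (hsemi i).2 hwi
        rw [hvj]
        exact mul_nonpos_of_nonpos_of_nonneg this hcij.le
  · rintro ⟨v, w, hv, hw, hv0, hw0, huvw, hsemi⟩
    choose tv htv using hker v hv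
    choose tw htw using hker w hw
    have hBv : Bmap c tv = v := by
      funext j
      obtain ⟨i, hij⟩ := hcover j
      rw [hpoint tv i j hij, ← htv i j (Function.mem_support.mpr hij)]
    have hBw : Bmap c tw = w := by
      funext j
      obtain ⟨i, hij⟩ := hcover j
      rw [hpoint tw i j hij, ← htw i j (Function.mem_support.mpr hij)]
    refine ⟨tv, tw, ?_, ?_, ?_, ?_, ?_, ?_⟩
    · show (bouquetMatrix A c).mulVec tv = 0
      rw [← hBker, hBv]; exact hv
    · show (bouquetMatrix A c).mulVec tw = 0
      rw [← hBker, hBw]; exact hw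
    · intro h; exact hv0 (by rw [← hBv, h]; funext j; simp [Bmap])
    · intro h; exact hw0 (by rw [← hBw, h]; funext j; simp [Bmap])
    · funext i
      obtain ⟨j, hj⟩ := hne i
      have hj' : c i j ≠ 0 := hj
      have h1 : Bmap c u j = u i * c i j := hpoint u i j hj'
      have h2 : Bmap c u j = (tv i + tw i) * c i j := by
        rw [huvw]
        have := htv i j hj
        have := htw i j hj
        simp only [Pi.add_apply]
        rw [htv i j hj, htw i j hj]; ring
      have := h1.symm.trans h2
      exact mul_right_cancel₀ hj' this
    · intro i
      obtain ⟨j, hj⟩ := hne i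
      have hj' : c i j ≠ 0 := hj
      have hcij := hpos i j hj'
      have hvj := htv i j hj
      have hwj := htw i j hj
      constructor
      · intro h
        have hvjpos : 0 < v j := by rw [hvj]; positivity
        have := (hsemi j).1 hvjpos
        rw [hwj] at this
        nlinarith
      · intro h
        have hwjneg : w j < 0 := by rw [hwj]; exact mul_neg_of_neg_of_pos h hcij
        have := (hsemi j).2 hwjneg
        rw [hvj] at this
        nlinarith
end

section
/- Let A : Matrix (Fin m) (Fin n) ℤ with a bouquet decomposition c_1, …, c_s such that every c_i has both a positive and a negative coordinate. Then: (i) ker_ℤ(A) contains no nonzero componentwise-nonnegative vector; and (ii) no element of the Graver basis Gr(A) admits a proper semiconformal decomposition in ker_ℤ(A). -/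
theorem all_bouquets_mixed_implies_graver_indispensable {m n s : ℕ}
    (A : Matrix (Fin m) (Fin n) ℤ) (c : Fin s → Fin n → ℤ)
    (hc : IsBouquetDecomposition A c)
    (hmixed : ∀ i, (∃ j, 0 < c i j) ∧ (∃ j, c i j < 0)) :
    (¬ ∃ v ∈ kerZ A, v ≠ 0 ∧ ∀ j, 0 ≤ v j) ∧
    (¬ ∃ u v w : Fin n → ℤ, InGraver A u ∧
      IsProperSemiconformalDecomp A u v w) := by
  obtain ⟨hne, hdis, hcov, hker⟩ := hc
  constructor
  · rintro ⟨v, hv, hv0, hvnn⟩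
    obtain ⟨j, hj⟩ := Function.ne_iff.mp hv0
    obtain ⟨i, hcij⟩ := hcov j
    obtain ⟨t, ht⟩ := hker v hv i
    have hvj := ht j hcij
    have ht0 : t ≠ 0 := by
      intro h; rw [h, zero_mul] at hvj; exact hj hvj
    obtain ⟨⟨jp, hjp⟩, ⟨jn, hjn⟩⟩ := hmixed i
    have hvp := ht jp (by simp [Function.mem_support]; omega)
    have hvn := ht jn (by simp [Function.mem_support]; omega)
    rcases lt_trichotomy t 0 with h | h | h
    · have : v jp < 0 := by rw [hvp]; exact mul_neg_of_neg_of_pos h hjp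
      exact absurd (hvnn jp) (not_le.mpr this)
    · exact ht0 h
    · have : v jn < 0 := by rw [hvn]; exact mul_neg_of_pos_of_neg h hjn
      exact absurd (hvnn jn) (not_le.mpr this)
  · rintro ⟨u, v, w, ⟨hu, hu0, hnc⟩, hv, hw, hv0, hw0, huvw, hsemi⟩
    apply hnc
    have key : ∀ j, 0 ≤ v j * w j := by
      intro j
      obtain ⟨i, hcij⟩ := hcov j
      obtain ⟨tv, htv⟩ := hker v hv i
      obtain ⟨tw, htw⟩ := hker w hw i
      have hvj := htv j hcij
      have hwj := htw j hcij
      have httw : 0 ≤ tv * tw := by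
        by_contra h
        push_neg at h
        obtain ⟨⟨jp, hjp⟩, ⟨jn, hjn⟩⟩ := hmixed i
        have hvp := htv jp (by simp [Function.mem_support]; omega)
        have hwp := htw jp (by simp [Function.mem_support]; omega)
        have hvn := htv jn (by simp [Function.mem_support]; omega)
        have hwn := htw jn (by simp [Function.mem_support]; omega)
        rcases mul_neg_iff.mp h with ⟨h1, h2⟩ | ⟨h1, h2⟩
        · have hv' : 0 < v jp := by rw [hvp]; exact mul_pos h1 hjp
          have hw' : w jp < 0 := by rw [hwp]; exact mul_neg_of_neg_of_pos h2 hjp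
          exact absurd ((hsemi jp).1 hv') (not_le.mpr hw')
        · have hv' : 0 < v jn := by rw [hvn]; exact mul_pos_of_neg_of_neg h1 hjn
          have hw' : w jn < 0 := by rw [hwn]; exact mul_neg_of_pos_of_neg h2 hjn
          exact absurd ((hsemi jn).1 hv') (not_le.mpr hw')
      rw [hvj, hwj]
      calc (0:ℤ) ≤ (tv * tw) * (c i j * c i j) :=
            mul_nonneg httw (mul_self_nonneg _)
        _ = tv * c i j * (tw * c i j) := by ring
    have sign : ∀ j, (0 ≤ v j ∧ 0 ≤ w j) ∨ (v j ≤ 0 ∧ w j ≤ 0) := by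
      intro j; exact mul_nonneg_iff.mp (key j)
    refine ⟨v, w, hv, hw, hv0, hw0, huvw, ?_, ?_⟩
    · funext j
      have := congrFun huvw j
      rcases sign j with ⟨h1, h2⟩ | ⟨h1, h2⟩ <;>
        simp only [posPartZ, Pi.add_apply, this] <;> omega
    · funext j
      have := congrFun huvw j
      rcases sign j with ⟨h1, h2⟩ | ⟨h1, h2⟩ <;>
        simp only [negPartZ, Pi.add_apply, this] <;> omega
end

section
/- Let D : Matrix (Fin m) (Fin n) ℤ and let Λ(D) : Matrix (Fin (m + n)) (Fin (n + n)) ℤ be its second Lawrence lifting, the block matrix with blocks D and 0 in the first m rows and the identity 1 and identity 1 in the last n rows (Matrix.fromBlocks D 0 1 1). Then: (i) ker_ℤ(Λ(D)) = { (u, −u) | u ∈ ker_ℤ(D) } (where (u, −u) denotes the vector on Fin (n+n) whose first block is u and second block is −u); (ii) for every u : Fin n → ℤ, (u, −u) belongs to the Graver basis Gr(Λ(D)) if and only if u belongs to Gr(D); (iii) no element of Gr(Λ(D)) admits a proper semiconformal decomposition in ker_ℤ(Λ(D)). -/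
/-- The second Lawrence lifting of `D`, as a matrix indexed by `Fin (m+n)` and
`Fin (n+n)`: the block matrix with blocks `D`, `0`, `1`, `1`. -/
def lawrenceLifting {m n : ℕ} (D : Matrix (Fin m) (Fin n) ℤ) :
    Matrix (Fin (m + n)) (Fin (n + n)) ℤ :=
  Matrix.reindex finSumFinEquiv finSumFinEquiv
    (Matrix.fromBlocks D (0 : Matrix (Fin m) (Fin n) ℤ)
      (1 : Matrix (Fin n) (Fin n) ℤ) (1 : Matrix (Fin n) (Fin n) ℤ))

/-- The vector `(u, -u)` on `Fin (n + n)`, whose first block is `u` and whose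
second block is `-u`. -/
def lawrencePair {n : ℕ} (u : Fin n → ℤ) : Fin (n + n) → ℤ :=
  Sum.elim u (-u) ∘ finSumFinEquiv.symm
namespace LawrenceAux

lemma pair_apply_inl {n : ℕ} (u : Fin n → ℤ) (i : Fin n) :
    lawrencePair u (finSumFinEquiv (Sum.inl i)) = u i := by
  unfold lawrencePair
  rw [Function.comp_apply, Equiv.symm_apply_apply]
  rfl

lemma pair_apply_inr {n : ℕ} (u : Fin n → ℤ) (i : Fin n) :
    lawrencePair u (finSumFinEquiv (Sum.inr i)) = -u i := by
  unfold lawrencePair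
  rw [Function.comp_apply, Equiv.symm_apply_apply]
  rfl

lemma pair_zero {n : ℕ} : lawrencePair (0 : Fin n → ℤ) = 0 := by
  funext j
  obtain ⟨s, rfl⟩ := finSumFinEquiv.surjective j
  cases s with
  | inl i => rw [pair_apply_inl]; rfl
  | inr i => rw [pair_apply_inr]; simp

lemma pair_eq_iff {n : ℕ} {z : Fin (n+n) → ℤ} {u : Fin n → ℤ} :
    z = lawrencePair u ↔
      (∀ i, z (finSumFinEquiv (Sum.inl i)) = u i) ∧
      (∀ i, z (finSumFinEquiv (Sum.inr i)) = -u i) := by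
  constructor
  · rintro rfl
    exact ⟨pair_apply_inl u, pair_apply_inr u⟩
  · rintro ⟨h1, h2⟩
    funext j
    obtain ⟨s, rfl⟩ := finSumFinEquiv.surjective j
    cases s with
    | inl i => rw [h1, pair_apply_inl]
    | inr i => rw [h2, pair_apply_inr]

lemma pair_ne_zero {n : ℕ} {u : Fin n → ℤ} (h : u ≠ 0) : lawrencePair u ≠ 0 := by
  intro hz
  apply h
  funext i
  have := congrFun hz (finSumFinEquiv (Sum.inl i))
  rw [pair_apply_inl] at this
  exact this

lemma pair_zero_of {n : ℕ} {u : Fin n → ℤ} (h : lawrencePair u = 0) : u = 0 := by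
  by_contra hu
  exact pair_ne_zero hu h

lemma pair_add {n : ℕ} (a b : Fin n → ℤ) :
    lawrencePair a + lawrencePair b = lawrencePair (a + b) := by
  rw [pair_eq_iff]
  refine ⟨fun i => ?_, fun i => ?_⟩ <;>
    simp only [Pi.add_apply, pair_apply_inl, pair_apply_inr, Pi.neg_apply] <;> ring

lemma pair_inj {n : ℕ} {a b : Fin n → ℤ} (h : lawrencePair a = lawrencePair b) :
    a = b := by
  funext i
  have := congrFun h (finSumFinEquiv (Sum.inl i))
  rw [pair_apply_inl, pair_apply_inl] at this
  exact this

lemma ker_lift_iff {m n : ℕ} (D : Matrix (Fin m) (Fin n) ℤ) (z : Fin (n+n) → ℤ) :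
    z ∈ kerZ (lawrenceLifting D) ↔ ∃ u ∈ kerZ D, z = lawrencePair u := by
  have hmv : (lawrenceLifting D).mulVec z =
      (Sum.elim (D.mulVec (z ∘ finSumFinEquiv ∘ Sum.inl))
        ((z ∘ finSumFinEquiv ∘ Sum.inl) + (z ∘ finSumFinEquiv ∘ Sum.inr))) ∘
        finSumFinEquiv.symm := by
    have hz : z ∘ finSumFinEquiv =
        Sum.elim (z ∘ finSumFinEquiv ∘ Sum.inl) (z ∘ finSumFinEquiv ∘ Sum.inr) := by
      funext s; cases s <;> rfl
    rw [lawrenceLifting, Matrix.reindex_apply,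
      Matrix.submatrix_mulVec_equiv, Equiv.symm_symm, hz,
      Matrix.fromBlocks_mulVec]
    simp
  constructor
  · intro hker
    have hker' : (lawrenceLifting D).mulVec z = 0 := hker
    rw [hmv] at hker'
    refine ⟨z ∘ finSumFinEquiv ∘ Sum.inl, ?_, ?_⟩
    · funext i
      have := congrFun hker' (finSumFinEquiv (Sum.inl i))
      simpa using this
    · rw [pair_eq_iff]
      refine ⟨fun i => rfl, fun i => ?_⟩
      have := congrFun hker' (finSumFinEquiv (Sum.inr i))
      simp only [Function.comp_apply, Equiv.symm_apply_apply, Sum.elim_inr,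
        Pi.add_apply, Pi.zero_apply] at this
      simp only [Function.comp_apply]
      linarith
  · rintro ⟨u, hu, rfl⟩
    show (lawrenceLifting D).mulVec (lawrencePair u) = 0
    rw [hmv]
    funext j
    obtain ⟨s, rfl⟩ := finSumFinEquiv.surjective j
    cases s with
    | inl i =>
      simp only [Function.comp_apply, Equiv.symm_apply_apply, Sum.elim_inl, Pi.zero_apply]
      have h1 : (lawrencePair u ∘ finSumFinEquiv ∘ Sum.inl) = u := by
        funext k; exact pair_apply_inl u k
      rw [h1]
      exact congrFun hu i
    | inr i =>
      simp only [Function.comp_apply, Equiv.symm_apply_apply, Sum.elim_inr,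
        Pi.add_apply, Pi.zero_apply]
      rw [pair_apply_inl, pair_apply_inr]
      ring

lemma conf_exists_iff {m n : ℕ} (D : Matrix (Fin m) (Fin n) ℤ) (u : Fin n → ℤ) :
    (∃ v w, IsProperConformalDecomp (lawrenceLifting D) (lawrencePair u) v w) ↔
      ∃ a b, IsProperConformalDecomp D u a b := by
  constructor
  · rintro ⟨v, w, hv, hw, hv0, hw0, hsum, hpos, hneg⟩
    obtain ⟨a, ha, rfl⟩ := (ker_lift_iff D v).mp hv
    obtain ⟨b, hb, rfl⟩ := (ker_lift_iff D w).mp hw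
    refine ⟨a, b, ha, hb, fun h => hv0 (by rw [h]; funext j; simp [lawrencePair]),
      fun h => hw0 (by rw [h]; funext j; simp [lawrencePair]), ?_, ?_, ?_⟩
    · rw [pair_add] at hsum
      exact pair_inj hsum
    · funext i
      have := congrFun hpos (finSumFinEquiv (Sum.inl i))
      simp only [posPartZ, Pi.add_apply, pair_apply_inl] at this
      exact this
    · funext i
      have := congrFun hpos (finSumFinEquiv (Sum.inr i))
      simp only [posPartZ, Pi.add_apply, pair_apply_inr] at this
      simpa only [negPartZ, Pi.add_apply] using this
  · rintro ⟨a, b, ha, hb, ha0, hb0, hsum, hpos, hneg⟩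
    refine ⟨lawrencePair a, lawrencePair b,
      (ker_lift_iff D _).mpr ⟨a, ha, rfl⟩, (ker_lift_iff D _).mpr ⟨b, hb, rfl⟩,
      pair_ne_zero ha0, pair_ne_zero hb0, by rw [pair_add, hsum], ?_, ?_⟩
    · funext j
      obtain ⟨s, rfl⟩ := finSumFinEquiv.surjective j
      cases s with
      | inl i =>
        have := congrFun hpos i
        simp only [posPartZ, Pi.add_apply] at this
        simp only [posPartZ, Pi.add_apply, pair_apply_inl]
        exact this
      | inr i =>
        have := congrFun hneg i
        simp only [negPartZ, Pi.add_apply] at this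
        simp only [posPartZ, Pi.add_apply, pair_apply_inr]
        exact this
    · funext j
      obtain ⟨s, rfl⟩ := finSumFinEquiv.surjective j
      cases s with
      | inl i =>
        have := congrFun hneg i
        simp only [negPartZ, Pi.add_apply] at this
        simp only [negPartZ, Pi.add_apply, pair_apply_inl]
        exact this
      | inr i =>
        have := congrFun hpos i
        simp only [posPartZ, Pi.add_apply] at this
        simp only [negPartZ, Pi.add_apply, pair_apply_inr, neg_neg]
        exact this

lemma graver_iff {m n : ℕ} (D : Matrix (Fin m) (Fin n) ℤ) (u : Fin n → ℤ) :
    InGraver (lawrenceLifting D) (lawrencePair u) ↔ InGraver D u := by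
  unfold InGraver
  rw [ker_lift_iff, conf_exists_iff]
  constructor
  · rintro ⟨⟨a, ha, hpa⟩, hne, hcf⟩
    have : a = u := (pair_inj hpa.symm)
    subst this
    exact ⟨ha, fun h => hne (by rw [h, pair_zero]), hcf⟩
  · rintro ⟨hu, hne, hcf⟩
    exact ⟨⟨u, hu, rfl⟩, pair_ne_zero hne, hcf⟩

end LawrenceAux

open LawrenceAux in
theorem lawrence_lifting_properties {m n : ℕ} (D : Matrix (Fin m) (Fin n) ℤ) :
    (kerZ (lawrenceLifting D) =
      {z : Fin (n + n) → ℤ | ∃ u ∈ kerZ D, z = lawrencePair u}) ∧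
    (∀ u : Fin n → ℤ, InGraver (lawrenceLifting D) (lawrencePair u) ↔ InGraver D u) ∧
    (¬ ∃ z v w : Fin (n + n) → ℤ, InGraver (lawrenceLifting D) z ∧
      IsProperSemiconformalDecomp (lawrenceLifting D) z v w) := by
  refine ⟨Set.ext fun z => ker_lift_iff D z, graver_iff D, ?_⟩
  rintro ⟨z, v, w, hzG, hv, hw, hv0, hw0, hsum, hsc⟩
  obtain ⟨u, hu, rfl⟩ := (ker_lift_iff D z).mp hzG.1
  have huG : InGraver D u := (graver_iff D u).mp hzG
  obtain ⟨a, ha, rfl⟩ := (ker_lift_iff D v).mp hv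
  obtain ⟨b, hb, rfl⟩ := (ker_lift_iff D w).mp hw
  have ha0 : a ≠ 0 := fun h => hv0 (by rw [h, pair_zero])
  have hb0 : b ≠ 0 := fun h => hw0 (by rw [h, pair_zero])
  have hab : u = a + b := by rw [pair_add] at hsum; exact pair_inj hsum
  -- sign compatibility from semiconformality on both blocks
  have hsign : ∀ i, (0 < a i → 0 ≤ b i) ∧ (b i < 0 → a i ≤ 0) ∧
      (a i < 0 → b i ≤ 0) ∧ (0 < b i → 0 ≤ a i) := by
    intro i
    have h1 := hsc (finSumFinEquiv (Sum.inl i))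
    have h2 := hsc (finSumFinEquiv (Sum.inr i))
    rw [pair_apply_inl a, pair_apply_inl b] at h1
    rw [pair_apply_inr a, pair_apply_inr b] at h2
    refine ⟨h1.1, h1.2, fun h => ?_, fun h => ?_⟩
    · have := h2.1 (by linarith)
      linarith
    · have := h2.2 (by linarith)
      linarith
  apply huG.2.2
  refine ⟨a, b, ha, hb, ha0, hb0, hab, ?_, ?_⟩
  · funext i
    obtain ⟨s1, s2, s3, s4⟩ := hsign i
    simp only [hab, posPartZ, Pi.add_apply]
    omega
  · funext i
    obtain ⟨s1, s2, s3, s4⟩ := hsign i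
    simp only [hab, negPartZ, Pi.add_apply]
    omega
end

section
/- Let M : Matrix (Fin m) (Fin n) ℤ have all entries in {0, 1}. Let U ⊆ Fin m, let E_U := {j : Fin n | ∃ i ∈ U, M i j = 1}, and assume E_U is nonempty. Let K_U := {v : Fin n → ℤ | the support of v is contained in E_U and Σ_j M i j · v_j = 0 for every i ∈ U}. Suppose there exists c : Fin n → ℤ with support exactly E_U such that K_U = {t • c | t ∈ ℤ}. Then: (i) c has both a positive and a negative coordinate; and (ii) for every v ∈ ker_ℤ(M) there is an integer t with v_j = t · c_j for every j ∈ E_U. -/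
theorem bouquet_with_basis_is_mixed_or_free {m n : ℕ}
    (M : Matrix (Fin m) (Fin n) ℤ)
    (h01 : ∀ i j, M i j = 0 ∨ M i j = 1)
    (U : Set (Fin m))
    (EU : Set (Fin n)) (hEU : EU = {j | ∃ i ∈ U, M i j = 1})
    (hEUne : EU.Nonempty)
    (KU : Set (Fin n → ℤ))
    (hKU : KU = {v : Fin n → ℤ | Function.support v ⊆ EU ∧
      ∀ i ∈ U, ∑ j, M i j * v j = 0})
    (c : Fin n → ℤ) (hcsupp : Function.support c = EU)
    (hKgen : KU = {v : Fin n → ℤ | ∃ t : ℤ, v = t • c}) :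
    ((∃ j, 0 < c j) ∧ (∃ j, c j < 0)) ∧
    (∀ v ∈ kerZ M, ∃ t : ℤ, ∀ j ∈ EU, v j = t * c j) := by
  classical
  have hcK : c ∈ KU := by
    rw [hKgen]; exact ⟨1, by simp⟩
  rw [hKU] at hcK
  obtain ⟨j0, hj0⟩ := hEUne
  have hcj0 : c j0 ≠ 0 := by
    rw [← hcsupp] at hj0; exact hj0
  obtain ⟨i0, hi0U, hi0⟩ : ∃ i ∈ U, M i j0 = 1 := by
    rw [hEU] at hj0; exact hj0
  have hsum : ∑ j, M i0 j * c j = 0 := hcK.2 i0 hi0U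
  constructor
  · constructor
    · by_contra h
      push_neg at h
      have hterm : ∀ j ∈ Finset.univ, M i0 j * c j ≤ 0 := by
        intro j _
        rcases h01 i0 j with h' | h' <;> simp [h', h j]
      have := (Finset.sum_eq_zero_iff_of_nonpos hterm).mp hsum j0 (Finset.mem_univ _)
      rw [hi0, one_mul] at this
      exact hcj0 this
    · by_contra h
      push_neg at h
      have hterm : ∀ j ∈ Finset.univ, 0 ≤ M i0 j * c j := by
        intro j _
        rcases h01 i0 j with h' | h' <;> simp [h', h j]
      have := (Finset.sum_eq_zero_iff_of_nonneg hterm).mp hsum j0 (Finset.mem_univ _)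
      rw [hi0, one_mul] at this
      exact hcj0 this
  · intro v hv
    set w : Fin n → ℤ := fun j => if j ∈ EU then v j else 0 with hw
    have hwK : w ∈ KU := by
      rw [hKU]
      constructor
      · intro j hj
        simp only [hw, Function.mem_support] at hj
        by_contra hjE
        simp [hjE] at hj
      · intro i hiU
        have h0 : M.mulVec v i = 0 := by rw [Set.mem_setOf_eq.mp hv]; rfl
        have h0' : ∑ j, M i j * v j = 0 := by
          simpa [Matrix.mulVec, dotProduct] using h0
        rw [← h0']
        apply Finset.sum_congr rfl
        intro j _
        by_cases hjE : j ∈ EU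
        · simp [hw, hjE]
        · have : M i j = 0 := by
            rcases h01 i j with h' | h'
            · exact h'
            · exact absurd (hEU ▸ (⟨i, hiU, h'⟩ : ∃ i ∈ U, M i j = 1)) hjE
          simp [this]
    rw [hKgen] at hwK
    obtain ⟨t, ht⟩ := hwK
    refine ⟨t, fun j hj => ?_⟩
    have : w j = t * c j := by rw [ht]; simp
    simpa [hw, hj] using this
end

section
/- Let M : Matrix (Fin m) (Fin n) ℤ have all entries in {0, 1}, and suppose there exists U ⊆ Fin m such that: (i) for every column j ∈ Fin n there is i ∈ U with M i j = 1, and (ii) every row i ∈ U contains exactly two entries equal to 1 (Σ_j M i j = 2). Then ker_ℤ(M) contains no nonzero componentwise-nonnegative vector, and no element of the Graver basis Gr(M) admits a proper semiconformal decomposition in ker_ℤ(M). -/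
/-!
Every column `j` lies in a row of `U`, and that row has exactly two ones, in columns `j` and
some `k`; so every kernel vector satisfies `x k = -x j`. A nonnegative kernel vector is therefore
zero. For a semiconformal decomposition `u = v + w`, the sign conditions at `j` and at its
partner `k` together force `v j` and `w j` to have the same sign, so the decomposition is
conformal, which a Graver basis element does not admit.
-/

section ZeroOneRow

variable {ι : Type*} [Fintype ι]

theorem dotProduct_eq_sum_filter_of_zero_one {r : ι → ℤ} (hr : ∀ l, r l = 0 ∨ r l = 1)
    (x : ι → ℤ) : r ⬝ᵥ x = ∑ l ∈ Finset.univ.filter (r · = 1), x l := by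
  rw [Finset.sum_filter, dotProduct]
  refine Finset.sum_congr rfl fun l _ => ?_
  rcases hr l with h | h <;> simp [h]

theorem exists_dotProduct_eq_add_of_zero_one_of_sum_eq_two {r : ι → ℤ}
    (hr : ∀ l, r l = 0 ∨ r l = 1) (hsum : ∑ l, r l = 2) {j : ι} (hj : r j = 1) :
    ∃ k, ∀ x, r ⬝ᵥ x = x j + x k := by
  classical
  have hcard : (Finset.univ.filter (r · = 1)).card = 2 := by
    have := dotProduct_eq_sum_filter_of_zero_one hr 1
    rw [dotProduct_one, hsum] at this
    simp only [Pi.one_apply, Finset.sum_const, nsmul_eq_mul, mul_one] at this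
    exact_mod_cast this.symm
  obtain ⟨a, b, hab, hs⟩ := Finset.card_eq_two.mp hcard
  have hjs : j ∈ Finset.univ.filter (r · = 1) := by simp [hj]
  rw [hs, Finset.mem_insert, Finset.mem_singleton] at hjs
  rcases hjs with rfl | rfl
  · exact ⟨b, fun x => by rw [dotProduct_eq_sum_filter_of_zero_one hr, hs, Finset.sum_pair hab]⟩
  · exact ⟨a, fun x => by
      rw [dotProduct_eq_sum_filter_of_zero_one hr, hs, Finset.sum_pair hab, add_comm]⟩

end ZeroOneRow

def HasOppositeCoordinates {n : ℕ} (S : Set (Fin n → ℤ)) : Prop :=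
  ∀ j, ∃ k, ∀ x ∈ S, x k = -x j

theorem hasOppositeCoordinates_kerZ {m n : ℕ} {M : Matrix (Fin m) (Fin n) ℤ}
    (h01 : ∀ i j, M i j = 0 ∨ M i j = 1) {U : Set (Fin m)}
    (hcover : ∀ j, ∃ i ∈ U, M i j = 1) (hdeg2 : ∀ i ∈ U, ∑ j, M i j = 2) :
    HasOppositeCoordinates (kerZ M) := by
  intro j
  obtain ⟨i, hiU, hij⟩ := hcover j
  obtain ⟨k, hk⟩ := exists_dotProduct_eq_add_of_zero_one_of_sum_eq_two (h01 i) (hdeg2 i hiU) hij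
  refine ⟨k, fun x hx => ?_⟩
  have hrow : M i ⬝ᵥ x = 0 := congrFun hx i
  linarith [hk x]

namespace HasOppositeCoordinates

variable {n : ℕ} {S : Set (Fin n → ℤ)}

theorem eq_zero_of_nonneg (hS : HasOppositeCoordinates S) {x : Fin n → ℤ} (hx : x ∈ S)
    (hnn : ∀ j, 0 ≤ x j) : x = 0 := by
  funext j
  obtain ⟨k, hk⟩ := hS j
  rw [Pi.zero_apply]
  linarith [hk x hx, hnn j, hnn k]

theorem mul_nonneg_of_semiconformal (hS : HasOppositeCoordinates S) {v w : Fin n → ℤ}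
    (hv : v ∈ S) (hw : w ∈ S) (hsemi : ∀ i, (0 < v i → 0 ≤ w i) ∧ (w i < 0 → v i ≤ 0))
    (j : Fin n) : 0 ≤ v j * w j := by
  obtain ⟨k, hk⟩ := hS j
  have hvk := hk v hv
  have hwk := hk w hw
  have hsj := hsemi j
  have hsk := hsemi k
  refine mul_nonneg_iff.mpr ?_
  omega

end HasOppositeCoordinates

theorem posPartZ_add_of_mul_nonneg {n : ℕ} {v w : Fin n → ℤ} (h : ∀ j, 0 ≤ v j * w j) :
    posPartZ (v + w) = posPartZ v + posPartZ w := by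
  funext j
  simp only [posPartZ, Pi.add_apply]
  rcases mul_nonneg_iff.mp (h j) <;> omega

theorem negPartZ_add_of_mul_nonneg {n : ℕ} {v w : Fin n → ℤ} (h : ∀ j, 0 ≤ v j * w j) :
    negPartZ (v + w) = negPartZ v + negPartZ w := by
  funext j
  simp only [negPartZ, Pi.add_apply]
  rcases mul_nonneg_iff.mp (h j) <;> omega

theorem IsProperSemiconformalDecomp.isProperConformalDecomp {m n : ℕ}
    {A : Matrix (Fin m) (Fin n) ℤ} (hA : HasOppositeCoordinates (kerZ A)) {u v w : Fin n → ℤ}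
    (h : IsProperSemiconformalDecomp A u v w) : IsProperConformalDecomp A u v w := by
  obtain ⟨hv, hw, hv0, hw0, rfl, hsemi⟩ := h
  have hsign := hA.mul_nonneg_of_semiconformal hv hw hsemi
  exact ⟨hv, hw, hv0, hw0, rfl, posPartZ_add_of_mul_nonneg hsign,
    negPartZ_add_of_mul_nonneg hsign⟩

theorem two_regular_cover_implies_graver_indispensable {m n : ℕ}
    (M : Matrix (Fin m) (Fin n) ℤ)
    (h01 : ∀ i j, M i j = 0 ∨ M i j = 1)
    (U : Set (Fin m))
    (hcover : ∀ j : Fin n, ∃ i ∈ U, M i j = 1)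
    (hdeg2 : ∀ i ∈ U, ∑ j, M i j = 2) :
    (¬ ∃ v ∈ kerZ M, v ≠ 0 ∧ ∀ j, 0 ≤ v j) ∧
    (¬ ∃ u v w : Fin n → ℤ, InGraver M u ∧
      IsProperSemiconformalDecomp M u v w) := by
  have hM := hasOppositeCoordinates_kerZ h01 hcover hdeg2
  exact ⟨fun ⟨v, hv, hv0, hnn⟩ => hv0 (hM.eq_zero_of_nonneg hv hnn),
    fun ⟨u, v, w, ⟨_, _, hindec⟩, hsemi⟩ => hindec ⟨v, w, hsemi.isProperConformalDecomp hM⟩⟩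
end
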